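/- arXiv:2010.00495 — 11 statements merged into one kernel-verified Lean document; each statement's English description precedes it below -/
import Mathlib

section
/- Let A be a k-uniform hypergraph and B a k'-uniform hypergraph on the same vertex set, each with exactly ℓ edges. Then the sum of |A∩A'| over unordered pairs of distinct edges of A, plus the sum of |B∩B'| over unordered pairs of distinct edges of B, is at least the sum of |A∩B| over all pairs (A edge of A, B edge of B), minus ℓ(k+k')/2. -/
open Finset

/-! Writing `d_A v` and `d_B v` for the degrees of a vertex `v` in `A` and `B`, double counting
gives `∑_{a,b} |a ∩ b| = ∑_v d_A v d_B v`, and likewise `∑_{a ≠ a'} |a ∩ a'| = ∑_v d_A v ² - ℓ k`.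
The inequality is then `∑_v (d_A v - d_B v)² ≥ 0`. -/

theorem Finset.sum_offDiag_add_sum_diag {ι M : Type*} [DecidableEq ι] [AddCommMonoid M]
    (s : Finset ι) (f : ι → ι → M) :
    ∑ p ∈ s.offDiag, f p.1 p.2 + ∑ i ∈ s, f i i = ∑ i ∈ s, ∑ j ∈ s, f i j := by
  rw [← sum_product' s s f, ← diag_union_offDiag, sum_union (disjoint_diag_offDiag s), add_comm,
    sum_diag s fun p => f p.1 p.2]

theorem Finset.two_mul_sum_mul_le_sum_sq_add_sum_sq {ι : Type*} (s : Finset ι) (f g : ι → ℕ) :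
    2 * ∑ i ∈ s, f i * g i ≤ ∑ i ∈ s, f i ^ 2 + ∑ i ∈ s, g i ^ 2 := by
  rw [mul_sum, ← sum_add_distrib]
  exact sum_le_sum fun i _ => by rw [← mul_assoc]; exact two_mul_le_add_sq _ _

section DoubleCounting

variable {α : Type*} [DecidableEq α] [Fintype α]

theorem sum_sum_card_inter_eq_sum_degree_mul (S T : Finset (Finset α)) :
    ∑ s ∈ S, ∑ t ∈ T, #(s ∩ t) = ∑ a, #{s ∈ S | a ∈ s} * #{t ∈ T | a ∈ t} := by
  simp_rw [card_filter, sum_mul_sum, ite_zero_mul_ite_zero, mul_one]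
  symm
  rw [sum_comm]
  refine sum_congr rfl fun s _ => ?_
  rw [sum_comm]
  refine sum_congr rfl fun t _ => ?_
  rw [← card_filter]
  congr 1
  ext
  simp

theorem sum_offDiag_card_inter_add_sum_card (S : Finset (Finset α)) :
    ∑ p ∈ S.offDiag, #(p.1 ∩ p.2) + ∑ s ∈ S, #s = ∑ a, #{s ∈ S | a ∈ s} ^ 2 := by
  simp_rw [sq, ← sum_sum_card_inter_eq_sum_degree_mul, ← sum_offDiag_add_sum_diag, inter_self]

end DoubleCounting

/-- Proposition 2.2: for a `k`-uniform hypergraph `A` and a `k'`-uniform hypergraph `B`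
on the same vertex set, each with `ℓ` edges, the sum of intersection sizes over unordered
pairs of distinct edges within `A` plus the same within `B` is at least the sum of
intersection sizes over all pairs (edge of `A`, edge of `B`) minus `ℓ(k+k')/2`.
(Sums over unordered pairs are expressed as half the sum over `offDiag`.) -/
theorem stmt_0 {V : Type*} [Fintype V] [DecidableEq V]
    (A B : Finset (Finset V)) (k k' ℓ : ℕ)
    (hA : ∀ e ∈ A, e.card = k) (hB : ∀ e ∈ B, e.card = k')
    (hAcard : A.card = ℓ) (hBcard : B.card = ℓ) :
    (∑ p ∈ A.offDiag, ((p.1 ∩ p.2).card : ℝ)) / 2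
      + (∑ p ∈ B.offDiag, ((p.1 ∩ p.2).card : ℝ)) / 2
    ≥ (∑ a ∈ A, ∑ b ∈ B, ((a ∩ b).card : ℝ)) - ℓ * (k + k') / 2 := by
  have hAA := sum_offDiag_card_inter_add_sum_card A
  have hBB := sum_offDiag_card_inter_add_sum_card B
  rw [sum_const_nat hA, hAcard] at hAA
  rw [sum_const_nat hB, hBcard] at hBB
  have hAB := sum_sum_card_inter_eq_sum_degree_mul A B
  have hdeg := two_mul_sum_mul_le_sum_sq_add_sum_sq univ
    (fun v => #{e ∈ A | v ∈ e}) (fun v => #{e ∈ B | v ∈ e})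
  have key : 2 * ∑ a ∈ A, ∑ b ∈ B, #(a ∩ b) ≤
      ∑ p ∈ A.offDiag, #(p.1 ∩ p.2) + ∑ p ∈ B.offDiag, #(p.1 ∩ p.2) + ℓ * (k + k') := by
    rw [hAB]
    linarith
  have key_real : 2 * ∑ a ∈ A, ∑ b ∈ B, ((a ∩ b).card : ℝ) ≤
      ∑ p ∈ A.offDiag, ((p.1 ∩ p.2).card : ℝ) + ∑ p ∈ B.offDiag, ((p.1 ∩ p.2).card : ℝ)
        + ℓ * (k + k') := by
    exact_mod_cast key
  linarith
end

section
/- Let H be a k-uniform hypergraph and S, T disjoint collections of ℓ ≥ 2 edges of H such that there exist x vertices each belonging to every edge in S and to no edge in T. Define λ_S = (1/C(ℓ,2)) ∑_{{e,f}⊆S} |e∩f|, λ_T analogously, and λ_{S,T} = (1/ℓ²) ∑_{e∈S, f∈T} |e∩f|. Then (λ_S + λ_T)/2 ≥ λ_{S,T} + x/2 − k/(ℓ−1). -/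
/-!
Write `a v`, `b v` for the number of edges of `S`, resp. `T`, containing the vertex `v`.
Double counting gives `∑ v, a v * b v` for the cross intersection sum and `∑ v, a v ^ 2 - ℓ k`
for the ordered pairs of distinct edges of `S` (similarly for `T`). The inequality then follows
by summing the pointwise bound `2 (ℓ - 1) a b ≤ ℓ (a² + b²)`, whose slack
`(ℓ - 1)(a - b)² + a² + b²` equals `ℓ³` at each of the `x` vertices of `W`, where `a = ℓ`, `b = 0`.
-/

open Finset

section

variable {V : Type*} [DecidableEq V]

def vertexDegree (A : Finset (Finset V)) (v : V) : ℕ := #{e ∈ A | v ∈ e}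

variable [Fintype V]

theorem sum_sum_card_inter_eq_sum_vertexDegree_mul (A B : Finset (Finset V)) :
    ∑ e ∈ A, ∑ f ∈ B, #(e ∩ f) = ∑ v, vertexDegree A v * vertexDegree B v := by
  have hcard (e f : Finset V) :
      #(e ∩ f) = ∑ v, (if v ∈ e then 1 else 0) * (if v ∈ f then (1 : ℕ) else 0) := by
    simp_rw [ite_zero_mul_ite_zero, ← mem_inter, one_mul, ← card_filter, filter_mem_eq_inter,
      univ_inter]
  simp_rw [vertexDegree, card_filter, sum_mul_sum, hcard]
  exact (sum_congr rfl fun e _ => sum_comm).trans sum_comm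

theorem sum_offDiag_card_inter_add_sum_card_s2 (A : Finset (Finset V)) :
    ∑ p ∈ A.offDiag, #(p.1 ∩ p.2) + ∑ e ∈ A, #e = ∑ v, vertexDegree A v ^ 2 := by
  have hdiag : ∑ p ∈ A.diag, #(p.1 ∩ p.2) = ∑ e ∈ A, #e := by
    rw [sum_diag]; simp_rw [inter_self]
  simp_rw [sq, ← sum_sum_card_inter_eq_sum_vertexDegree_mul,
    ← sum_product (f := fun p : Finset V × Finset V => #(p.1 ∩ p.2)), ← diag_union_offDiag,
    sum_union (disjoint_diag_offDiag A), hdiag, add_comm]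

theorem two_mul_sum_mul_add_pow_three_mul_card_le {ι : Type*} [Fintype ι] (W : Finset ι)
    (a b : ι → ℝ) {L : ℝ} (hL : 1 ≤ L) (haW : ∀ v ∈ W, a v = L) (hbW : ∀ v ∈ W, b v = 0) :
    2 * (L - 1) * ∑ v, a v * b v + L ^ 3 * #W ≤ L * (∑ v, a v ^ 2 + ∑ v, b v ^ 2) := by
  set q : ι → ℝ := fun v => (L - 1) * (a v - b v) ^ 2 + a v ^ 2 + b v ^ 2
  have hq : ∀ v, 0 ≤ q v := fun v =>
    add_nonneg (add_nonneg (mul_nonneg (sub_nonneg.2 hL) (sq_nonneg _)) (sq_nonneg _)) (sq_nonneg _)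
  have hqW : ∑ v ∈ W, q v = L ^ 3 * #W := by
    rw [sum_congr rfl fun v hv => show q v = L ^ 3 by simp only [q, haW v hv, hbW v hv]; ring,
      sum_const, nsmul_eq_mul, mul_comm]
  have hqsum : ∑ v, q v = L * (∑ v, a v ^ 2 + ∑ v, b v ^ 2) - 2 * (L - 1) * ∑ v, a v * b v := by
    simp only [q, mul_sum, ← sum_add_distrib, ← sum_sub_distrib]
    exact sum_congr rfl fun v _ => by ring
  linarith [sum_le_sum_of_subset_of_nonneg (subset_univ W) fun v _ _ => hq v]

end

theorem averages_le_of_quadratic_bound {L k x P Q R : ℝ} (hL : 1 < L) (hx : 0 ≤ x)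
    (h : 2 * (L - 1) * R + L ^ 3 * x ≤ L * (P + Q)) :
    R / (L * L) + x / 2 - k / (L - 1)
      ≤ ((P - L * k) / (L * (L - 1)) + (Q - L * k) / (L * (L - 1))) / 2 := by
  have hL0 : 0 < L := by linarith
  have hL1 : 0 < L - 1 := by linarith
  have hdiff : ((P - L * k) / (L * (L - 1)) + (Q - L * k) / (L * (L - 1))) / 2
      - (R / (L * L) + x / 2 - k / (L - 1))
      = (L * (P + Q) - 2 * (L - 1) * R - L ^ 2 * (L - 1) * x) / (2 * L ^ 2 * (L - 1)) := by
    field_simp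
    ring
  have hnum : 0 ≤ L * (P + Q) - 2 * (L - 1) * R - L ^ 2 * (L - 1) * x := by
    nlinarith [mul_nonneg (sq_nonneg L) hx]
  linarith [div_nonneg hnum (by positivity : (0 : ℝ) ≤ 2 * L ^ 2 * (L - 1))]

theorem stmt_2_general {V : Type*} [Fintype V] [DecidableEq V]
    (H : Finset (Finset V)) (k ℓ x : ℕ) (hℓ : 2 ≤ ℓ)
    (hunif : ∀ e ∈ H, e.card = k)
    (S T : Finset (Finset V)) (hSH : S ⊆ H) (hTH : T ⊆ H)
    (hS : S.card = ℓ) (hT : T.card = ℓ)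
    (W : Finset V) (hW : W.card = x)
    (hWS : ∀ e ∈ S, W ⊆ e) (hWT : ∀ e ∈ T, Disjoint W e) :
    ((∑ p ∈ S.offDiag, ((p.1 ∩ p.2).card : ℝ)) / (ℓ * (ℓ - 1))
      + (∑ p ∈ T.offDiag, ((p.1 ∩ p.2).card : ℝ)) / (ℓ * (ℓ - 1))) / 2
    ≥ (∑ e ∈ S, ∑ f ∈ T, ((e ∩ f).card : ℝ)) / (ℓ * ℓ) + x / 2 - k / (ℓ - 1) := by
  have hL : (2 : ℝ) ≤ ℓ := by exact_mod_cast hℓ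
  have hoffDiag (A : Finset (Finset V)) (hAH : A ⊆ H) (hA : #A = ℓ) :
      ∑ p ∈ A.offDiag, (#(p.1 ∩ p.2) : ℝ) = ∑ v, (vertexDegree A v : ℝ) ^ 2 - ℓ * k := by
    have hsum : ∑ e ∈ A, #e = ℓ * k := by
      rw [sum_congr rfl fun e he => hunif e (hAH he), sum_const, hA, smul_eq_mul]
    rw [eq_sub_iff_add_eq]
    exact_mod_cast hsum ▸ sum_offDiag_card_inter_add_sum_card_s2 A
  have hcross :
      ∑ e ∈ S, ∑ f ∈ T, (#(e ∩ f) : ℝ) = ∑ v, (vertexDegree S v : ℝ) * vertexDegree T v := by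
    exact_mod_cast sum_sum_card_inter_eq_sum_vertexDegree_mul S T
  have hdegS : ∀ v ∈ W, (vertexDegree S v : ℝ) = ℓ := fun v hv => by
    rw [vertexDegree, filter_true_of_mem fun e he => hWS e he hv, hS]
  have hdegT : ∀ v ∈ W, (vertexDegree T v : ℝ) = 0 := fun v hv => by
    rw [vertexDegree, filter_false_of_mem fun e he => disjoint_left.mp (hWT e he) hv, card_empty,
      Nat.cast_zero]
  have hquad := two_mul_sum_mul_add_pow_three_mul_card_le W _ _ (by linarith) hdegS hdegT
  rw [hoffDiag S hSH hS, hoffDiag T hTH hT, hcross, ← hW]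
  exact averages_le_of_quadratic_bound (by linarith) (Nat.cast_nonneg _) hquad

/-- Lemma 2.3: averaging lemma. `S, T` are disjoint collections of `ℓ ≥ 2` edges of a
`k`-uniform hypergraph `H`, and there is a set `W` of `x` vertices contained in every edge
of `S` and disjoint from every edge of `T`. Then `(λ_S + λ_T)/2 ≥ λ_{S,T} + x/2 − k/(ℓ−1)`,
where `λ_S`, `λ_T`, `λ_{S,T}` are the average pairwise intersection sizes within `S`, within
`T`, and across `S` and `T`. (The average over unordered pairs equals the sum over `offDiag`
divided by `ℓ(ℓ−1)`.) -/
theorem stmt_2 {V : Type*} [Fintype V] [DecidableEq V]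
    (H : Finset (Finset V)) (k ℓ x : ℕ) (hℓ : 2 ≤ ℓ)
    (hunif : ∀ e ∈ H, e.card = k)
    (S T : Finset (Finset V)) (hSH : S ⊆ H) (hTH : T ⊆ H) (hdisj : Disjoint S T)
    (hS : S.card = ℓ) (hT : T.card = ℓ)
    (W : Finset V) (hW : W.card = x)
    (hWS : ∀ e ∈ S, W ⊆ e) (hWT : ∀ e ∈ T, Disjoint W e) :
    ((∑ p ∈ S.offDiag, ((p.1 ∩ p.2).card : ℝ)) / (ℓ * (ℓ - 1))
      + (∑ p ∈ T.offDiag, ((p.1 ∩ p.2).card : ℝ)) / (ℓ * (ℓ - 1))) / 2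
    ≥ (∑ e ∈ S, ∑ f ∈ T, ((e ∩ f).card : ℝ)) / (ℓ * ℓ) + x / 2 - k / (ℓ - 1) :=
  stmt_2_general H k ℓ x hℓ hunif S T hSH hTH hS hT W hW hWS hWT
end

section
/- Any k-uniform hypergraph that is not 2-colorable has at least 2^{k−1} edges. -/
/-!
Double counting of (coloring, monochromatic edge) pairs: every 2-coloring of the `n` vertices
makes some edge monochromatic, while a fixed `k`-edge is monochromatic under exactly `2^(n-k+1)`
colorings. Hence `2^n ≤ |H| · 2^(n-k+1)`, i.e. `2^(k-1) ≤ |H|`.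
-/

open Finset

def monochromaticEquivProd {V α : Type*} {e : Finset V} [DecidablePred (· ∈ e)] {a : V}
    (ha : a ∈ e) :
    {c : V → α // ∀ u ∈ e, ∀ v ∈ e, c u = c v} ≃ α × ({x // x ∉ e} → α) where
  toFun c := (c.1 a, fun x => c.1 x)
  invFun p := ⟨fun x => if hx : x ∈ e then p.1 else p.2 ⟨x, hx⟩,
    fun u hu v hv => by simp [hu, hv]⟩
  left_inv c := by
    ext x
    by_cases hx : x ∈ e
    · simp [hx, c.2 a ha x hx]
    · simp [hx]
  right_inv p := by
    ext x
    · simp [ha]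
    · simp [x.2]

section

variable {V α : Type*} [Fintype V] [DecidableEq V] [Fintype α] [DecidableEq α]

variable (α) in
def monochromaticColorings (e : Finset V) : Finset (V → α) :=
  univ.filter fun c => ∀ u ∈ e, ∀ v ∈ e, c u = c v

theorem mem_monochromaticColorings {e : Finset V} {c : V → α} :
    c ∈ monochromaticColorings α e ↔ ∀ u ∈ e, ∀ v ∈ e, c u = c v := by
  simp [monochromaticColorings]

theorem card_monochromaticColorings {e : Finset V} (he : e.Nonempty) :
    #(monochromaticColorings α e) = Fintype.card α ^ (Fintype.card V - #e + 1) := by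
  obtain ⟨a, ha⟩ := he
  rw [monochromaticColorings, ← Fintype.card_subtype,
    Fintype.card_congr (monochromaticEquivProd ha)]
  simp [Fintype.card_subtype_compl, pow_succ, mul_comm]

theorem pow_pred_le_card_of_forall_exists_monochromatic [Nonempty α]
    (H : Finset (Finset V)) (k : ℕ) (hunif : ∀ e ∈ H, #e = k)
    (hmono : ∀ c : V → α, ∃ e ∈ H, ∀ u ∈ e, ∀ v ∈ e, c u = c v) :
    Fintype.card α ^ (k - 1) ≤ #H := by
  set n := Fintype.card V
  set q := Fintype.card α
  obtain ⟨e₀, he₀, -⟩ := hmono fun _ => Classical.arbitrary α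
  rcases Nat.eq_zero_or_pos k with rfl | hk
  · exact card_pos.mpr ⟨e₀, he₀⟩
  have hkn : k ≤ n := hunif e₀ he₀ ▸ e₀.card_le_univ
  have hcover : (univ : Finset (V → α)) ⊆ H.biUnion (monochromaticColorings α) := by
    intro c _
    obtain ⟨e, he, hc⟩ := hmono c
    exact mem_biUnion.mpr ⟨e, he, mem_monochromaticColorings.mpr hc⟩
  have hcount : q ^ (k - 1) * q ^ (n - k + 1) ≤ #H * q ^ (n - k + 1) :=
    calc q ^ (k - 1) * q ^ (n - k + 1)
        = #(univ : Finset (V → α)) := by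
          rw [← pow_add, card_univ, Fintype.card_fun]
          congr 1
          omega
      _ ≤ ∑ e ∈ H, #(monochromaticColorings α e) :=
          (card_le_card hcover).trans card_biUnion_le
      _ = #H * q ^ (n - k + 1) := by
          rw [sum_const_nat fun e he => ?_]
          rw [card_monochromaticColorings (card_pos.mp (hunif e he ▸ hk)), hunif e he]
  exact Nat.le_of_mul_le_mul_right hcount (by positivity)

end

theorem stmt_3_general {V : Type*} [Fintype V]
    (H : Finset (Finset V)) (k : ℕ)
    (hunif : ∀ e ∈ H, e.card = k)
    (hnc : ¬ ∃ c : V → Bool, ∀ e ∈ H, ∃ u ∈ e, ∃ v ∈ e, c u ≠ c v) :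
    2 ^ (k - 1) ≤ H.card := by
  classical
  push Not at hnc
  simpa using pow_pred_le_card_of_forall_exists_monochromatic H k hunif hnc

/-- Erdős' bound: any `k`-uniform hypergraph that is not 2-colorable (i.e. every
2-coloring of the vertices yields a monochromatic edge) has at least `2^(k-1)` edges. -/
theorem stmt_3 {V : Type*} [Fintype V] [DecidableEq V]
    (H : Finset (Finset V)) (k : ℕ)
    (hunif : ∀ e ∈ H, e.card = k)
    (hnc : ¬ ∃ c : V → Bool, ∀ e ∈ H, ∃ u ∈ e, ∃ v ∈ e, c u ≠ c v) :
    2 ^ (k - 1) ≤ H.card :=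
  stmt_3_general H k hunif hnc
end

section
/- Every intersecting hypergraph has chromatic number at most 3, i.e., its vertices can be colored with 3 colors so that no edge is monochromatic, provided every edge has size at least 2. -/
/-!
Fix an edge `e₀` of minimum size and a vertex `a ∈ e₀`; colour `a` with `0`, the rest of `e₀`
with `1` and every other vertex with `2`. An edge through `a` has a second vertex, which is not
coloured `0`. An edge `f` avoiding `a` meets `e₀`, so it has a vertex coloured `1`; and it is not
contained in `e₀ \ {a}`, which is smaller than `e₀`, so it has a vertex coloured `2`.
-/

open Finset

section

variable {V : Type*} [DecidableEq V]

def pivotColoring (e₀ : Finset V) (a : V) (v : V) : Fin 3 :=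
  if v = a then 0 else if v ∈ e₀ then 1 else 2

lemma Finset.exists_mem_notMem_of_card_le {e₀ f : Finset V} {a : V} (ha : a ∈ e₀) (haf : a ∉ f)
    (hcard : #e₀ ≤ #f) : ∃ w ∈ f, w ∉ e₀ := by
  by_contra! hsub
  have hf : f ⊆ e₀.erase a := fun x hx => mem_erase.2 ⟨fun hxa => haf (hxa ▸ hx), hsub x hx⟩
  have := card_le_card hf
  rw [card_erase_of_mem ha] at this
  have := card_pos.2 ⟨a, ha⟩
  omega

lemma pivotColoring_not_monochromatic {e₀ f : Finset V} {a : V} (ha : a ∈ e₀)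
    (hf : 2 ≤ #f) (hmeet : (f ∩ e₀).Nonempty) (hcard : #e₀ ≤ #f) :
    ∃ u ∈ f, ∃ v ∈ f, pivotColoring e₀ a u ≠ pivotColoring e₀ a v := by
  by_cases haf : a ∈ f
  · obtain ⟨w, hw, hwa⟩ := f.exists_mem_ne hf a
    refine ⟨a, haf, w, hw, ?_⟩
    unfold pivotColoring
    split_ifs <;> simp_all
  · obtain ⟨v, hv⟩ := hmeet
    obtain ⟨hvf, hve⟩ := mem_inter.1 hv
    obtain ⟨w, hwf, hwe⟩ := exists_mem_notMem_of_card_le ha haf hcard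
    refine ⟨v, hvf, w, hwf, ?_⟩
    have hva : v ≠ a := fun h => haf (h ▸ hvf)
    have hwa : w ≠ a := fun h => hwe (h ▸ ha)
    simp [pivotColoring, hva, hve, hwa, hwe]

end

theorem stmt_5_general {V : Type*} [DecidableEq V]
    (H : Finset (Finset V)) (hne : H.Nonempty)
    (hsize : ∀ e ∈ H, 2 ≤ e.card)
    (hint : ∀ e ∈ H, ∀ f ∈ H, (e ∩ f).Nonempty) :
    ∃ c : V → Fin 3, ∀ e ∈ H, ∃ u ∈ e, ∃ v ∈ e, c u ≠ c v := by
  obtain ⟨e₀, he₀, hmin⟩ := H.exists_min_image card hne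
  obtain ⟨a, ha⟩ : e₀.Nonempty := card_pos.1 (by linarith [hsize e₀ he₀])
  exact ⟨pivotColoring e₀ a, fun f hf =>
    pivotColoring_not_monochromatic ha (hsize f hf) (hint f hf e₀ he₀) (hmin f hf)⟩

/-- Every intersecting hypergraph (with at least one edge, all edges of size at least 2)
has chromatic number at most 3: there is a 3-coloring of the vertices with no
monochromatic edge. -/
theorem stmt_5 {V : Type*} [Fintype V] [DecidableEq V]
    (H : Finset (Finset V)) (hne : H.Nonempty)
    (hsize : ∀ e ∈ H, 2 ≤ e.card)
    (hint : ∀ e ∈ H, ∀ f ∈ H, (e ∩ f).Nonempty) :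
    ∃ c : V → Fin 3, ∀ e ∈ H, ∃ u ∈ e, ∃ v ∈ e, c u ≠ c v :=
  stmt_5_general H hne hsize hint
end

section
/- Let H be a k-uniform hypergraph that is 3-chromatic (not 2-colorable) and intersecting, and let X ⊆ V(H). Then for any 0 ≤ i ≤ k − |X| there exists a set X_i ⊆ V(H) with |X_i| = |X| + i such that the number of edges of H containing X_i is at least k^{−i} times the number of edges containing X. -/
/-!
Colour the vertices by membership in `X`. Since `H` is not 2-colourable, some edge `Y` is
monochromatic, and when `|X| < k` it cannot lie inside `X`, so `Y` is disjoint from `X`. As `H` is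
intersecting, every edge through `X` meets the `k` vertices of `Y`, so some `v ∈ Y` lies in at
least a `1/k` fraction of them; adding `v` to `X` and iterating gives the claim.
-/

open Finset

theorem Finset.exists_mem_card_le_mul_card_filter_mem {α : Type*} [DecidableEq α]
    {A : Finset (Finset α)} {Y : Finset α} (hY : Y.Nonempty) (hA : ∀ e ∈ A, (Y ∩ e).Nonempty) :
    ∃ v ∈ Y, #A ≤ #Y * #{e ∈ A | v ∈ e} := by
  have hcover : #A ≤ ∑ v ∈ Y, #{e ∈ A | v ∈ e} :=
    calc #A ≤ #(Y.biUnion fun v => {e ∈ A | v ∈ e}) := card_le_card fun e he => by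
            obtain ⟨v, hv⟩ := hA e he
            rw [mem_inter] at hv
            exact mem_biUnion.mpr ⟨v, hv.1, mem_filter.mpr ⟨he, hv.2⟩⟩
      _ ≤ ∑ v ∈ Y, #{e ∈ A | v ∈ e} := card_biUnion_le
  refine exists_le_of_sum_le hY ?_
  rw [sum_const, smul_eq_mul, ← mul_sum]
  exact Nat.mul_le_mul_left _ hcover

theorem exists_mem_subset_or_disjoint_of_not_two_colorable {V : Type*}
    {H : Finset (Finset V)} (hnc : ¬ ∃ c : V → Bool, ∀ e ∈ H, ∃ u ∈ e, ∃ v ∈ e, c u ≠ c v)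
    (X : Finset V) : ∃ Y ∈ H, Y ⊆ X ∨ Disjoint Y X := by
  classical
  push Not at hnc
  obtain ⟨Y, hY, hmono⟩ := hnc fun v => decide (v ∈ X)
  refine ⟨Y, hY, ?_⟩
  by_cases hYX : ∃ v ∈ Y, v ∈ X
  · obtain ⟨v, hvY, hvX⟩ := hYX
    exact Or.inl fun u hu => by simpa [hvX] using hmono u hu v hvY
  · push Not at hYX
    exact Or.inr (disjoint_left.mpr hYX)

section IntersectingNotTwoColorable

variable {V : Type*} [DecidableEq V] {H : Finset (Finset V)} {k : ℕ}

theorem exists_card_filter_le_mul_card_filter_insert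
    (hunif : ∀ e ∈ H, e.card = k)
    (hnc : ¬ ∃ c : V → Bool, ∀ e ∈ H, ∃ u ∈ e, ∃ v ∈ e, c u ≠ c v)
    (hint : ∀ e ∈ H, ∀ f ∈ H, (e ∩ f).Nonempty) {X : Finset V} (hX : #X < k) :
    ∃ v ∉ X, #{e ∈ H | X ⊆ e} ≤ k * #{e ∈ H | insert v X ⊆ e} := by
  obtain ⟨Y, hY, hYX⟩ := exists_mem_subset_or_disjoint_of_not_two_colorable hnc X
  have hYk := hunif Y hY
  have hdisj : Disjoint Y X := hYX.resolve_left fun h => (card_le_card h).not_gt (hYk ▸ hX)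
  obtain ⟨v, hvY, hv⟩ := exists_mem_card_le_mul_card_filter_mem (A := {e ∈ H | X ⊆ e})
    (card_pos.mp (by omega)) fun e he => hint Y hY e (mem_filter.mp he).1
  refine ⟨v, disjoint_left.mp hdisj hvY, ?_⟩
  simpa only [hYk, filter_filter, insert_subset_iff, and_comm] using hv

theorem exists_card_eq_card_add_card_filter_le_pow_mul
    (hunif : ∀ e ∈ H, e.card = k)
    (hnc : ¬ ∃ c : V → Bool, ∀ e ∈ H, ∃ u ∈ e, ∃ v ∈ e, c u ≠ c v)
    (hint : ∀ e ∈ H, ∀ f ∈ H, (e ∩ f).Nonempty) (X : Finset V) {i : ℕ} (hi : #X + i ≤ k) :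
    ∃ Xi : Finset V, #Xi = #X + i ∧ #{e ∈ H | X ⊆ e} ≤ k ^ i * #{e ∈ H | Xi ⊆ e} := by
  induction i with
  | zero => exact ⟨X, rfl, by simp⟩
  | succ i ih =>
    obtain ⟨Xi, hcard, hle⟩ := ih (by omega)
    obtain ⟨v, hv, hstep⟩ :=
      exists_card_filter_le_mul_card_filter_insert hunif hnc hint (X := Xi) (by omega)
    refine ⟨insert v Xi, by rw [card_insert_of_notMem hv, hcard, add_assoc], ?_⟩
    calc #{e ∈ H | X ⊆ e} ≤ k ^ i * #{e ∈ H | Xi ⊆ e} := hle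
      _ ≤ k ^ i * (k * #{e ∈ H | insert v Xi ⊆ e}) := Nat.mul_le_mul_left _ hstep
      _ = k ^ (i + 1) * #{e ∈ H | insert v Xi ⊆ e} := by ring

end IntersectingNotTwoColorable

theorem stmt_6_general {V : Type*} [DecidableEq V]
    (H : Finset (Finset V)) (k : ℕ)
    (hunif : ∀ e ∈ H, e.card = k)
    (hnc : ¬ ∃ c : V → Bool, ∀ e ∈ H, ∃ u ∈ e, ∃ v ∈ e, c u ≠ c v)
    (hint : ∀ e ∈ H, ∀ f ∈ H, (e ∩ f).Nonempty)
    (X : Finset V) (i : ℕ) (hi : X.card + i ≤ k) :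
    ∃ Xi : Finset V, Xi.card = X.card + i ∧
      ((H.filter fun e => Xi ⊆ e).card : ℝ)
        ≥ ((H.filter fun e => X ⊆ e).card : ℝ) / (k : ℝ) ^ i := by
  obtain ⟨Xi, hcard, hle⟩ := exists_card_eq_card_add_card_filter_le_pow_mul hunif hnc hint X hi
  refine ⟨Xi, hcard, div_le_of_le_mul₀ (by positivity) (by positivity) ?_⟩
  rw [mul_comm]
  exact_mod_cast hle

/-- Proposition 2.4: for a `k`-uniform, 3-chromatic (not 2-colorable), intersecting
hypergraph `H` and any `X ⊆ V(H)` and `0 ≤ i ≤ k − |X|`, there is a set `Xᵢ` of size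
`|X| + i` such that at least a `k^{-i}` proportion of the edges containing `X` also
contain `Xᵢ`. -/
theorem stmt_6 {V : Type*} [Fintype V] [DecidableEq V]
    (H : Finset (Finset V)) (k : ℕ)
    (hunif : ∀ e ∈ H, e.card = k)
    (hnc : ¬ ∃ c : V → Bool, ∀ e ∈ H, ∃ u ∈ e, ∃ v ∈ e, c u ≠ c v)
    (hint : ∀ e ∈ H, ∀ f ∈ H, (e ∩ f).Nonempty)
    (X : Finset V) (i : ℕ) (hi : X.card + i ≤ k) :
    ∃ Xi : Finset V, Xi.card = X.card + i ∧
      ((H.filter fun e => Xi ⊆ e).card : ℝ)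
        ≥ ((H.filter fun e => X ⊆ e).card : ℝ) / (k : ℝ) ^ i :=
  stmt_6_general H k hunif hnc hint X i hi
end

section
/- Let H be a k-uniform, not 2-colorable hypergraph with the property that for every vertex set X of size less than k there exists a k-set Y ⊆ V(H)\X intersecting every edge of H. Then for any X ⊆ V(H) and 0 ≤ i ≤ k−|X|, there is a superset X_i of size |X|+i contained in at least a k^{−i} fraction of the edges of H that contain X. -/
open Finset

/-
If every edge meets a `k`-set `Y` avoiding `X`, then some `y ∈ Y` lies in at least a `1/k`
fraction of the edges containing `X`, by pigeonhole over `Y`. Since the covering property applies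
as long as `|X| < k`, this step can be iterated `i` times starting from any `X` with
`|X| + i ≤ k`, losing a factor `k` each time.
-/

section

variable {V : Type*} [DecidableEq V]

theorem exists_mem_card_filter_subset_le_mul {H : Finset (Finset V)} {S Y : Finset V}
    (hY : Y.Nonempty) (hmeet : ∀ e ∈ H, (e ∩ Y).Nonempty) :
    ∃ y ∈ Y, #(H.filter fun e => S ⊆ e) ≤ #Y * #(H.filter fun e => insert y S ⊆ e) := by
  have hcover : #(H.filter fun e => S ⊆ e)
      ≤ ∑ y ∈ Y, #(H.filter fun e => insert y S ⊆ e) := by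
    refine (card_le_card fun e he => ?_).trans card_biUnion_le
    rw [mem_filter] at he
    obtain ⟨y, hy⟩ := hmeet e he.1
    rw [mem_inter] at hy
    exact mem_biUnion.2 ⟨y, hy.2, mem_filter.2 ⟨he.1, insert_subset hy.1 he.2⟩⟩
  refine exists_le_of_sum_le hY ?_
  rw [sum_const, smul_eq_mul, ← mul_sum]
  exact Nat.mul_le_mul_left _ hcover

theorem exists_superset_card_filter_subset_le {H : Finset (Finset V)} {k : ℕ}
    (hcov : ∀ X : Finset V, #X < k →
      ∃ Y : Finset V, #Y = k ∧ Disjoint X Y ∧ ∀ e ∈ H, (e ∩ Y).Nonempty)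
    (X : Finset V) {i : ℕ} (hi : #X + i ≤ k) :
    ∃ Xi : Finset V, X ⊆ Xi ∧ #Xi = #X + i ∧
      #(H.filter fun e => X ⊆ e) ≤ k ^ i * #(H.filter fun e => Xi ⊆ e) := by
  induction i with
  | zero => exact ⟨X, subset_rfl, rfl, by simp⟩
  | succ i ih =>
    obtain ⟨Xi, hXXi, hcard, hle⟩ := ih (by omega)
    obtain ⟨Y, hYcard, hdisj, hmeet⟩ := hcov Xi (by omega)
    have hY : Y.Nonempty := by rw [← card_pos, hYcard]; omega
    obtain ⟨y, hyY, hstep⟩ := exists_mem_card_filter_subset_le_mul (S := Xi) hY hmeet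
    have hyXi : y ∉ Xi := disjoint_right.1 hdisj hyY
    refine ⟨insert y Xi, hXXi.trans (subset_insert _ _),
      by rw [card_insert_of_notMem hyXi, hcard, add_assoc], ?_⟩
    rw [hYcard] at hstep
    calc #(H.filter fun e => X ⊆ e)
        ≤ k ^ i * #(H.filter fun e => Xi ⊆ e) := hle
      _ ≤ k ^ i * (k * #(H.filter fun e => insert y Xi ⊆ e)) := Nat.mul_le_mul_left _ hstep
      _ = k ^ (i + 1) * #(H.filter fun e => insert y Xi ⊆ e) := by ring

end

theorem stmt_7_general {V : Type*} [DecidableEq V]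
    (H : Finset (Finset V)) (k : ℕ)
    (hcov : ∀ X : Finset V, X.card < k →
      ∃ Y : Finset V, Y.card = k ∧ Disjoint X Y ∧ ∀ e ∈ H, (e ∩ Y).Nonempty)
    (X : Finset V) (i : ℕ) (hi : X.card + i ≤ k) :
    ∃ Xi : Finset V, X ⊆ Xi ∧ Xi.card = X.card + i ∧
      ((H.filter fun e => Xi ⊆ e).card : ℝ)
        ≥ ((H.filter fun e => X ⊆ e).card : ℝ) / (k : ℝ) ^ i := by
  obtain ⟨Xi, hXXi, hcard, hle⟩ := exists_superset_card_filter_subset_le hcov X hi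
  refine ⟨Xi, hXXi, hcard, div_le_of_le_mul₀ (by positivity) (by positivity) ?_⟩
  rw [mul_comm]
  exact_mod_cast hle

/-- Variant of Proposition 2.4 under the weaker covering hypothesis: `H` is `k`-uniform,
not 2-colorable, and for every vertex set `X` with `|X| < k` there is a `k`-set `Y`
disjoint from `X` meeting every edge of `H`. Then for any `X` and `0 ≤ i ≤ k − |X|` there
is a superset `Xᵢ ⊇ X` of size `|X| + i` contained in at least a `k^{-i}` fraction of the
edges of `H` containing `X`. -/
theorem stmt_7 {V : Type*} [Fintype V] [DecidableEq V]
    (H : Finset (Finset V)) (k : ℕ)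
    (hunif : ∀ e ∈ H, e.card = k)
    (hnc : ¬ ∃ c : V → Bool, ∀ e ∈ H, ∃ u ∈ e, ∃ v ∈ e, c u ≠ c v)
    (hcov : ∀ X : Finset V, X.card < k →
      ∃ Y : Finset V, Y.card = k ∧ Disjoint X Y ∧ ∀ e ∈ H, (e ∩ Y).Nonempty)
    (X : Finset V) (i : ℕ) (hi : X.card + i ≤ k) :
    ∃ Xi : Finset V, X ⊆ Xi ∧ Xi.card = X.card + i ∧
      ((H.filter fun e => Xi ⊆ e).card : ℝ)
        ≥ ((H.filter fun e => X ⊆ e).card : ℝ) / (k : ℝ) ^ i :=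
  stmt_7_general H k hcov X i hi
end

section
/- Let d > 0 and let t ≤ n be positive integers. Let G be a graph with m > 4 t d^{−t} n vertices and at least d m²/2 edges. Then there is a vertex subset U of G with |U| > 2n such that the proportion of t-element subsets of U having fewer than n common neighbors in G is less than (2t)^{−t}. -/
/-!
Pick a uniformly random `t`-tuple `T` of vertices and let `U = N(T)` be its common neighbourhood.
By convexity `𝔼|U| = Σ_v deg(v)^t / m^t ≥ d^t m > 4tn`. A `t`-set `S` lies in `U` iff `T` lies
in `N(S)^t`, so the expected number `Y` of `t`-sets in `U` with fewer than `n` common neighbours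
is at most `C(m, t) (n / m)^t ≤ n^t / t!`. Hence for `K = 2 t! / n^(t-1)` the expectation of
`|U| - K Y` exceeds `2tn`, and some `T` achieves `|U| > 2tn + K Y`. AM–GM applied to `t - 1`
copies of `n` and one copy of `KY/2` turns this into `(2t)^t Y < C(|U|, t)`.
-/

open Finset
open scoped Nat

lemma card_filter_image_subset_eq_pow {α : Type*} [Fintype α] [DecidableEq α]
    (B : Finset α) (t : ℕ) : #{T : Fin t → α | univ.image T ⊆ B} = #B ^ t := by
  rw [← Fintype.card_piFinset_const]
  congr 1
  ext T
  simp [image_subset_iff]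

theorem succ_pow_mul_pow_mul_le_mul_add_pow {a b : ℝ} (ha : 0 ≤ a) (hb : 0 ≤ b) (s : ℕ) :
    ((s : ℝ) + 1) ^ (s + 1) * a ^ s * b ≤ (s * a + b) ^ (s + 1) := by
  rcases ha.eq_or_lt with rfl | ha
  · rcases s with _ | s <;> simp [hb]
  -- Bernoulli's inequality at `x = (b / a - 1) / (s + 1)`
  have hs : (0 : ℝ) < s + 1 := by positivity
  have hx : -2 ≤ (b / a - 1) / (s + 1) := by
    rw [le_div_iff₀ hs]; nlinarith [div_nonneg hb ha.le]
  have h := one_add_mul_le_pow hx (s + 1)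
  have e1 : 1 + ((s + 1 : ℕ) : ℝ) * ((b / a - 1) / (s + 1)) = b / a := by
    push_cast; field_simp; ring
  have e2 : 1 + (b / a - 1) / (s + 1) = (s * a + b) / (a * (s + 1)) := by field_simp; ring
  rw [e1, e2, div_pow, le_div_iff₀ (by positivity)] at h
  calc ((s : ℝ) + 1) ^ (s + 1) * a ^ s * b = b / a * (a * (s + 1)) ^ (s + 1) := by
        rw [mul_pow, pow_succ a]; field_simp
    _ ≤ _ := h

theorem lt_choose_of_add_mul_lt {t n X Y : ℕ} (ht : 0 < t) (htn : t ≤ n)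
    (h : 2 * t * n + 2 * t ! / n ^ (t - 1) * Y < (X : ℝ)) :
    2 * n < (X : ℝ) ∧ (Y : ℝ) < (2 * t : ℝ)⁻¹ ^ t * X.choose t := by
  obtain ⟨s, rfl⟩ : ∃ s, t = s + 1 := ⟨t - 1, by omega⟩
  simp only [add_tsub_cancel_right] at h
  have hn : (0 : ℝ) < n := by exact_mod_cast ht.trans_le htn
  have hsn : ((s + 1 : ℕ) : ℝ) ≤ n := by exact_mod_cast htn
  set K : ℝ := 2 * (s + 1)! / n ^ s
  have hKY : 0 ≤ K * Y := by positivity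
  push_cast at h hsn ⊢
  have hX : 2 * n < (X : ℝ) := by nlinarith
  refine ⟨hX, ?_⟩
  have hXs : s + 1 ≤ X := by
    exact_mod_cast (show ((s + 1 : ℕ) : ℝ) ≤ X by push_cast; linarith)
  have hfac : (0 : ℝ) < (s + 1)! := by exact_mod_cast (s + 1).factorial_pos
  have key : (2 * (s + 1 : ℝ)) ^ (s + 1) * Y * (s + 1)! < (X.choose (s + 1)) * (s + 1)! :=
    calc (2 * (s + 1 : ℝ)) ^ (s + 1) * Y * (s + 1)!
        = 2 ^ (s + 1) * ((s + 1) ^ (s + 1) * n ^ s * (K * Y / 2)) := by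
          simp only [K]; field_simp; rw [mul_pow]; ring
      _ ≤ 2 ^ (s + 1) * (s * n + K * Y / 2) ^ (s + 1) := by
          gcongr; exact succ_pow_mul_pow_mul_le_mul_add_pow hn.le (by positivity) s
      _ = (2 * s * n + K * Y) ^ (s + 1) := by rw [← mul_pow]; ring
      _ < (X - 2 * n) ^ (s + 1) := by gcongr; linarith
      _ ≤ ((X + 1 - (s + 1) : ℕ) : ℝ) ^ (s + 1) := by
          refine pow_le_pow_left₀ (by linarith) ?_ _
          rw [Nat.cast_sub (by omega)]; push_cast; linarith
      _ ≤ X.choose (s + 1) * (s + 1)! := (div_le_iff₀ hfac).1 (Nat.pow_le_choose _ _)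
  rw [inv_pow, inv_mul_eq_div, lt_div_iff₀' (by positivity)]
  exact lt_of_mul_lt_mul_right key hfac.le

namespace SimpleGraph

variable {V : Type*} [Fintype V] (G : SimpleGraph V) [DecidableRel G.Adj]

def commonNeighborFinset (S : Finset V) : Finset V := {v | ∀ u ∈ S, G.Adj v u}

variable {G}

@[simp] lemma mem_commonNeighborFinset {S : Finset V} {v : V} :
    v ∈ G.commonNeighborFinset S ↔ ∀ u ∈ S, G.Adj v u := by
  simp [commonNeighborFinset]

lemma subset_commonNeighborFinset_comm {S T : Finset V} :
    S ⊆ G.commonNeighborFinset T ↔ T ⊆ G.commonNeighborFinset S := by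
  simp only [subset_iff, mem_commonNeighborFinset]
  exact ⟨fun h u hu v hv => (h hv u hu).symm, fun h u hu v hv => (h hv u hu).symm⟩

lemma commonNeighborFinset_singleton (v : V) :
    G.commonNeighborFinset {v} = G.neighborFinset v := by
  ext; simp [G.adj_comm]

variable (G)

theorem pow_mul_card_pow_le_sum_degree_pow {d : ℝ} (hd : 0 ≤ d)
    (he : d * Fintype.card V ^ 2 / 2 ≤ #G.edgeFinset) (t : ℕ) :
    d ^ t * Fintype.card V ^ (t + 1) ≤ ∑ v, (G.degree v : ℝ) ^ t := by
  set m : ℝ := (Fintype.card V : ℝ)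
  rcases t with _ | s
  · simp [m]
  have hdeg : d * m ^ 2 ≤ ∑ v, (G.degree v : ℝ) := by
    have := G.sum_degrees_eq_twice_card_edges
    rw [← Nat.cast_sum, this]
    push_cast; linarith
  rcases (show 0 ≤ m by positivity).eq_or_lt with hm | hm
  · rw [← hm, zero_pow (by omega), mul_zero]
    positivity
  calc d ^ (s + 1) * m ^ (s + 1 + 1) = (d * m ^ 2) ^ (s + 1) / m ^ s := by
        field_simp; ring
    _ ≤ (∑ v, (G.degree v : ℝ)) ^ (s + 1) / m ^ s := by gcongr
    _ ≤ ∑ v, (G.degree v : ℝ) ^ (s + 1) := pow_sum_div_card_le_sum_pow (by simp) s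

variable [DecidableEq V]

theorem sum_card_filter_subset_commonNeighborFinset (𝒮 : Finset (Finset V)) (t : ℕ) :
    ∑ T : Fin t → V, #{S ∈ 𝒮 | S ⊆ G.commonNeighborFinset (univ.image T)}
      = ∑ S ∈ 𝒮, #(G.commonNeighborFinset S) ^ t := by
  rw [← sum_congr rfl fun S _ => card_filter_image_subset_eq_pow (G.commonNeighborFinset S) t]
  simp_rw [← subset_commonNeighborFinset_comm]
  exact sum_card_bipartiteAbove_eq_sum_card_bipartiteBelow _

theorem sum_card_commonNeighborFinset_image (t : ℕ) :
    ∑ T : Fin t → V, #(G.commonNeighborFinset (univ.image T)) = ∑ v, G.degree v ^ t := by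
  have h := G.sum_card_filter_subset_commonNeighborFinset (univ.powersetCard 1) t
  simp_rw [powersetCard_one, filter_map, card_map, sum_map] at h
  simp only [Function.Embedding.coeFn_mk, Function.comp_def, singleton_subset_iff,
    filter_univ_mem, commonNeighborFinset_singleton, card_neighborFinset_eq_degree] at h
  exact h

theorem sum_card_filter_powersetCard_commonNeighborFinset_le (k t n : ℕ) :
    ∑ T : Fin t → V, #{S ∈ (G.commonNeighborFinset (univ.image T)).powersetCard k |
        #(G.commonNeighborFinset S) < n}
      ≤ (Fintype.card V).choose k * n ^ t := by
  set 𝒮 : Finset (Finset V) := {S ∈ univ.powersetCard k | #(G.commonNeighborFinset S) < n}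
  have h𝒮 : ∀ U : Finset V, {S ∈ U.powersetCard k | #(G.commonNeighborFinset S) < n}
      = {S ∈ 𝒮 | S ⊆ U} := by
    intro U; ext S; simp [𝒮, mem_powersetCard]; tauto
  simp_rw [h𝒮, sum_card_filter_subset_commonNeighborFinset]
  calc ∑ S ∈ 𝒮, #(G.commonNeighborFinset S) ^ t ≤ ∑ S ∈ 𝒮, n ^ t :=
        sum_le_sum fun S hS => Nat.pow_le_pow_left (mem_filter.1 hS).2.le t
    _ ≤ (Fintype.card V).choose k * n ^ t := by
        rw [sum_const, smul_eq_mul]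
        gcongr
        exact (card_filter_le _ _).trans (by rw [card_powersetCard, Finset.card_univ])

theorem factorial_div_mul_sum_card_filter_powersetCard_commonNeighborFinset_le {t n : ℕ}
    (ht : 0 < t) (hn : 0 < n) :
    2 * t ! / n ^ (t - 1) * ∑ T : Fin t → V,
        (#{S ∈ (G.commonNeighborFinset (univ.image T)).powersetCard t |
          #(G.commonNeighborFinset S) < n} : ℝ)
      ≤ 2 * n * Fintype.card V ^ t := by
  have hK : 2 * t ! / n ^ (t - 1) * (n : ℝ) ^ t = 2 * n * t ! := by
    obtain ⟨s, rfl⟩ : ∃ s, t = s + 1 := ⟨t - 1, by omega⟩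
    simp only [add_tsub_cancel_right]
    field_simp
    ring
  calc _ ≤ 2 * t ! / n ^ (t - 1) * ((Fintype.card V).choose t * n ^ t : ℝ) := by
        gcongr
        exact_mod_cast G.sum_card_filter_powersetCard_commonNeighborFinset_le t t n
    _ = 2 * n * (t ! * (Fintype.card V).choose t) := by rw [mul_left_comm, hK]; ring
    _ ≤ 2 * n * Fintype.card V ^ t := by
        gcongr
        rw [← le_div_iff₀' (by positivity)]
        exact Nat.choose_le_pow_div t _

theorem exists_add_mul_lt_card_commonNeighborFinset {d : ℝ} {t n : ℕ} (hd : 0 ≤ d)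
    (ht : 0 < t) (hn : 0 < n) (hm : 4 * t * n < d ^ t * Fintype.card V)
    (he : d * Fintype.card V ^ 2 / 2 ≤ #G.edgeFinset) :
    ∃ T : Fin t → V, 2 * t * n + 2 * t ! / n ^ (t - 1) *
        (#{S ∈ (G.commonNeighborFinset (univ.image T)).powersetCard t |
          #(G.commonNeighborFinset S) < n} : ℝ)
      < #(G.commonNeighborFinset (univ.image T)) := by
  set m : ℝ := (Fintype.card V : ℝ)
  have hm0 : 0 < m := pos_of_mul_pos_right ((by positivity : (0 : ℝ) ≤ 4 * t * n).trans_lt hm)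
    (by positivity)
  have hX : d ^ t * m ^ t * m ≤
      ∑ T : Fin t → V, (#(G.commonNeighborFinset (univ.image T)) : ℝ) := by
    have h := congrArg (Nat.cast (R := ℝ)) (G.sum_card_commonNeighborFinset_image t)
    push_cast at h
    rw [h, mul_assoc, ← pow_succ]
    exact G.pow_mul_card_pow_le_sum_degree_pow hd he t
  have hY := G.factorial_div_mul_sum_card_filter_powersetCard_commonNeighborFinset_le ht hn
  have hcard : (Fintype.card (Fin t → V) : ℝ) = m ^ t := by simp [m]
  have ht1 : (1 : ℝ) ≤ t := by exact_mod_cast ht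
  have hmt := pow_pos hm0 t
  by_contra! h
  have hsum := sum_le_sum fun T (_ : T ∈ univ) => h T
  rw [sum_add_distrib, sum_const, Finset.card_univ, nsmul_eq_mul, hcard, ← mul_sum] at hsum
  nlinarith [mul_lt_mul_of_pos_right hm hmt, mul_nonneg (sub_nonneg.2 ht1) hmt.le]

end SimpleGraph

open SimpleGraph in
/-- Dependent random choice (Lemma 2.5). If `d > 0`, `t ≤ n` are positive integers, and `G`
is a graph with `m > 4 t d^{-t} n` vertices and at least `d m² / 2` edges, then there is a
vertex subset `U` with `|U| > 2n` such that the proportion of `t`-element subsets of `U`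
having fewer than `n` common neighbors is less than `(2t)^{-t}`. -/
theorem stmt_8 {V : Type*} [Fintype V] [DecidableEq V]
    (G : SimpleGraph V) [DecidableRel G.Adj]
    (d : ℝ) (t n : ℕ) (hd : 0 < d) (ht : 0 < t) (htn : t ≤ n)
    (hm : (Fintype.card V : ℝ) > 4 * t * d⁻¹ ^ t * n)
    (he : (G.edgeFinset.card : ℝ) ≥ d * (Fintype.card V : ℝ) ^ 2 / 2) :
    ∃ U : Finset V, (U.card : ℝ) > 2 * n ∧
      (((U.powersetCard t).filter fun S =>
          (Finset.univ.filter fun v => ∀ u ∈ S, G.Adj v u).card < n).card : ℝ)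
        < ((2 * t : ℝ))⁻¹ ^ t * ((U.powersetCard t).card : ℝ) := by
  have hdm : 4 * t * n < d ^ t * Fintype.card V :=
    calc (4 * t * n : ℝ) = d ^ t * (4 * t * d⁻¹ ^ t * n) := by rw [inv_pow]; field_simp
      _ < d ^ t * Fintype.card V := by gcongr
  obtain ⟨T, hT⟩ :=
    G.exists_add_mul_lt_card_commonNeighborFinset hd.le ht (ht.trans_le htn) hdm he
  refine ⟨G.commonNeighborFinset (univ.image T), ?_⟩
  rw [card_powersetCard]
  -- the statement decides `∀ u ∈ S, _` by `Fintype`, `commonNeighborFinset` by `Finset`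
  convert lt_choose_of_add_mul_lt ht htn hT
  ext; simp
end

section
/- Let H be a k-uniform hypergraph with k ≥ 4, let t ≥ 3, and suppose X and Y' are disjoint collections of edges of H with |X| = |Y'| = t such that every pair of distinct edges of X intersects in at most λ vertices and every edge of X intersects every edge of Y' in at least λ vertices. Then the average pairwise intersection size within Y' satisfies λ_{Y'} ≥ λ − 2k/(t−1). -/
/-!
Counting over vertices, `∑_{(e,f) ∈ S × T} |e ∩ f| = ∑_v d_S(v) d_T(v)`, so the vertexwise
inequality `2ab ≤ a² + b²` bounds twice the cross sum over `X × Y'` by the sums over `X × X` and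
`Y' × Y'`. In a `k`-uniform family the diagonal pairs contribute `tk` to each of these, and with
`λ_X ≤ λ ≤ λ_{X,Y'}` only those `2tk` are lost in the lower bound for `λ_{Y'}`.
-/

open Finset

namespace Finset

variable {α : Type*} [DecidableEq α]

theorem card_inter_eq_sum_ite {U e : Finset α} (he : e ⊆ U) (f : Finset α) :
    #(e ∩ f) = ∑ v ∈ U, (if v ∈ e then 1 else 0) * (if v ∈ f then 1 else 0) := by
  simp_rw [ite_zero_mul_ite_zero, mul_one, ← card_filter, ← mem_inter,
    filter_mem_eq_inter, inter_eq_right.2 (inter_subset_left.trans he)]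

theorem sum_product_card_inter_eq_sum_mul {U : Finset α} (S T : Finset (Finset α))
    (hS : ∀ e ∈ S, e ⊆ U) :
    ∑ p ∈ S ×ˢ T, #(p.1 ∩ p.2) = ∑ v ∈ U, #{e ∈ S | v ∈ e} * #{f ∈ T | v ∈ f} := by
  simp_rw [card_filter, sum_mul_sum, sum_product]
  calc ∑ e ∈ S, ∑ f ∈ T, #(e ∩ f)
      = ∑ e ∈ S, ∑ v ∈ U, ∑ f ∈ T, (if v ∈ e then 1 else 0) * (if v ∈ f then 1 else 0) :=
        sum_congr rfl fun e he => by
          rw [sum_comm]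
          exact sum_congr rfl fun f _ => card_inter_eq_sum_ite (hS e he) f
    _ = _ := sum_comm

theorem two_mul_sum_product_card_inter_le (S T : Finset (Finset α)) :
    2 * ∑ p ∈ S ×ˢ T, #(p.1 ∩ p.2)
      ≤ ∑ p ∈ S ×ˢ S, #(p.1 ∩ p.2) + ∑ p ∈ T ×ˢ T, #(p.1 ∩ p.2) := by
  have hS : ∀ e ∈ S, e ⊆ (S ∪ T).biUnion id :=
    fun e he => subset_biUnion_of_mem id (mem_union_left T he)
  have hT : ∀ e ∈ T, e ⊆ (S ∪ T).biUnion id :=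
    fun e he => subset_biUnion_of_mem id (mem_union_right S he)
  rw [sum_product_card_inter_eq_sum_mul S T hS, sum_product_card_inter_eq_sum_mul S S hS,
    sum_product_card_inter_eq_sum_mul T T hT, mul_sum, ← sum_add_distrib]
  refine sum_le_sum fun v _ => ?_
  simpa only [mul_assoc, sq] using two_mul_le_add_sq #{e ∈ S | v ∈ e} #{f ∈ T | v ∈ f}

theorem sum_product_self_card_inter {S : Finset (Finset α)} {k : ℕ} (hS : ∀ e ∈ S, #e = k) :
    ∑ p ∈ S ×ˢ S, #(p.1 ∩ p.2) = #S * k + ∑ p ∈ S.offDiag, #(p.1 ∩ p.2) := by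
  rw [← diag_union_offDiag, sum_union (disjoint_diag_offDiag S), sum_diag]
  simp_rw [inter_self]
  rw [sum_congr rfl hS, sum_const, smul_eq_mul]

theorem two_mul_sum_product_card_inter_le_of_uniform {S T : Finset (Finset α)} {k : ℕ}
    (hS : ∀ e ∈ S, #e = k) (hT : ∀ e ∈ T, #e = k) :
    2 * ∑ p ∈ S ×ˢ T, #(p.1 ∩ p.2) ≤ (#S + #T) * k
      + ∑ p ∈ S.offDiag, #(p.1 ∩ p.2) + ∑ p ∈ T.offDiag, #(p.1 ∩ p.2) := by
  have := two_mul_sum_product_card_inter_le S T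
  rw [sum_product_self_card_inter hS, sum_product_self_card_inter hT] at this
  linarith

end Finset

theorem stmt_9_general {V : Type*} [DecidableEq V]
    (H : Finset (Finset V)) (k t lam : ℕ) (ht : 3 ≤ t)
    (hunif : ∀ e ∈ H, e.card = k)
    (X Y' : Finset (Finset V)) (hXH : X ⊆ H) (hYH : Y' ⊆ H)
    (hX : X.card = t) (hY : Y'.card = t)
    (hXsmall : ∀ e ∈ X, ∀ f ∈ X, e ≠ f → (e ∩ f).card ≤ lam)
    (hcross : ∀ e ∈ X, ∀ f ∈ Y', lam ≤ (e ∩ f).card) :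
    (∑ p ∈ Y'.offDiag, ((p.1 ∩ p.2).card : ℝ)) / (t * (t - 1))
      ≥ (lam : ℝ) - 2 * k / (t - 1) := by
  have hXY := two_mul_sum_product_card_inter_le_of_uniform (fun e he => hunif e (hXH he))
    (fun e he => hunif e (hYH he))
  have hcross_sum : #(X ×ˢ Y') • lam ≤ ∑ p ∈ X ×ˢ Y', #(p.1 ∩ p.2) :=
    card_nsmul_le_sum _ _ _ fun p hp => hcross p.1 (mem_product.1 hp).1 p.2 (mem_product.1 hp).2
  have hX_sum : ∑ p ∈ X.offDiag, #(p.1 ∩ p.2) ≤ #X.offDiag • lam :=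
    sum_le_card_nsmul _ _ _ fun p hp => by
      obtain ⟨he, hf, hne⟩ := mem_offDiag.1 hp
      exact hXsmall p.1 he p.2 hf hne
  rw [card_product, hX, hY, smul_eq_mul] at hcross_sum
  rw [offDiag_card, hX, smul_eq_mul] at hX_sum
  rw [hX, hY] at hXY
  have hY_sum : (t : ℝ) * (t - 1) * lam - 2 * t * k ≤ ∑ p ∈ Y'.offDiag, (#(p.1 ∩ p.2) : ℝ) := by
    rify [Nat.le_mul_self t] at hXY hcross_sum hX_sum
    linarith [mul_nonneg (Nat.cast_nonneg (α := ℝ) t) (Nat.cast_nonneg (α := ℝ) lam)]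
  have ht1 : (0 : ℝ) < t - 1 := sub_pos.2 (by exact_mod_cast (by omega : 1 < t))
  rw [ge_iff_le, le_div_iff₀ (by positivity), sub_mul, div_mul_eq_mul_div, mul_div_assoc,
    mul_div_cancel_right₀ _ ht1.ne']
  linarith

/-- Second claim in the proof of the main theorem: if `X` and `Y'` are disjoint `t`-sets of
edges of a `k`-uniform hypergraph such that all pairwise intersections within `X` have size
at most `λ` and every edge of `X` meets every edge of `Y'` in at least `λ` vertices, then
the average pairwise intersection size within `Y'` is at least `λ − 2k/(t−1)`. -/
theorem stmt_9 {V : Type*} [Fintype V] [DecidableEq V]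
    (H : Finset (Finset V)) (k t lam : ℕ) (hk : 4 ≤ k) (ht : 3 ≤ t)
    (hunif : ∀ e ∈ H, e.card = k)
    (X Y' : Finset (Finset V)) (hXH : X ⊆ H) (hYH : Y' ⊆ H) (hdisj : Disjoint X Y')
    (hX : X.card = t) (hY : Y'.card = t)
    (hXsmall : ∀ e ∈ X, ∀ f ∈ X, e ≠ f → (e ∩ f).card ≤ lam)
    (hcross : ∀ e ∈ X, ∀ f ∈ Y', lam ≤ (e ∩ f).card) :
    (∑ p ∈ Y'.offDiag, ((p.1 ∩ p.2).card : ℝ)) / (t * (t - 1))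
      ≥ (lam : ℝ) - 2 * k / (t - 1) :=
  stmt_9_general H k t lam ht hunif X Y' hXH hYH hX hY hXsmall hcross
end

section
/- Let S and T be disjoint sets of edges of a k-uniform hypergraph, each of size s = t/2 where t ≥ 18 and k ≥ 1, such that there is a set of x = 10t vertices contained in every edge of S and disjoint from every edge of T, and all pairwise intersections within S and within T have size at most λ. If t ≥ 2⌈√k⌉, then λ_{S,T} ≤ λ − 8√k and consequently λ_{S∪T} ≤ λ − (s²/C(2s,2))·8√k < λ − 2√k. -/
/-!
Let `d_A(v)` be the number of edges of the family `A` containing `v`. Double counting gives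
`∑_v (d_S(v) - d_T(v))² = ∑_{e,f ∈ S} |e ∩ f| + ∑_{e,f ∈ T} |e ∩ f| - 2 ∑_{e ∈ S, f ∈ T} |e ∩ f|`,
and on the vertices of `W` the summand is `s²`. The diagonal terms contribute `2sk`, so the
cross sum is at most `s(s-1)λ + sk - 5ts²`, which is `s²(λ - 8√k)` or less once `√k ≤ s`.
The bound for `S ∪ T` follows by splitting its ordered pairs into those inside `S`, inside `T`
and across.
-/

open Finset

namespace Finset

variable {V : Type*} [DecidableEq V]

def degree (A : Finset (Finset V)) (v : V) : ℕ := #{e ∈ A | v ∈ e}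

lemma sum_sum_card_inter_self (A : Finset (Finset V)) :
    ∑ e ∈ A, ∑ f ∈ A, #(e ∩ f) = ∑ p ∈ A.offDiag, #(p.1 ∩ p.2) + ∑ e ∈ A, #e := by
  rw [← sum_product', ← diag_union_offDiag, sum_union (disjoint_diag_offDiag A), sum_diag,
    add_comm]
  simp only [inter_self]

lemma sum_offDiag_card_inter_union {S T : Finset (Finset V)} (h : Disjoint S T) :
    ∑ p ∈ (S ∪ T).offDiag, #(p.1 ∩ p.2) = ∑ p ∈ S.offDiag, #(p.1 ∩ p.2)
      + ∑ p ∈ T.offDiag, #(p.1 ∩ p.2) + 2 * ∑ e ∈ S, ∑ f ∈ T, #(e ∩ f) := by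
  have hTS : ∑ e ∈ T, ∑ f ∈ S, #(e ∩ f) = ∑ e ∈ S, ∑ f ∈ T, #(e ∩ f) := by
    rw [sum_comm]
    simp only [inter_comm]
  have hfull := sum_sum_card_inter_self (S ∪ T)
  simp only [sum_union h, sum_add_distrib, hTS, sum_sum_card_inter_self] at hfull
  omega

lemma sum_offDiag_card_inter_le {A : Finset (Finset V)} {lam : ℕ}
    (h : ∀ e ∈ A, ∀ f ∈ A, e ≠ f → #(e ∩ f) ≤ lam) :
    ∑ p ∈ A.offDiag, (#(p.1 ∩ p.2) : ℝ) ≤ #A * (#A - 1) * lam := by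
  calc ∑ p ∈ A.offDiag, (#(p.1 ∩ p.2) : ℝ) ≤ #A.offDiag • (lam : ℝ) :=
        sum_le_card_nsmul _ _ _ fun p hp => by
          obtain ⟨he, hf, hne⟩ := mem_offDiag.mp hp
          exact_mod_cast h _ he _ hf hne
    _ = #A * (#A - 1) * lam := by
        rw [nsmul_eq_mul, offDiag_card, Nat.cast_sub (Nat.le_mul_self _)]
        push_cast
        ring

variable [Fintype V]

lemma sum_sum_card_inter_eq_sum_degree_mul (A B : Finset (Finset V)) :
    ∑ e ∈ A, ∑ f ∈ B, #(e ∩ f) = ∑ v, degree A v * degree B v := by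
  have hcard (e f : Finset V) :
      #(e ∩ f) = ∑ v, (if v ∈ e then 1 else 0) * (if v ∈ f then 1 else 0) := by
    rw [← filter_univ_mem (e ∩ f), card_filter]
    simp only [mem_inter, ite_zero_mul_ite_zero, mul_one, ite_and]
  simp only [degree, card_filter, sum_mul_sum, hcard]
  simp_rw [sum_comm (s := B) (t := univ)]
  exact sum_comm

lemma sum_sq_degree_sub_degree (A B : Finset (Finset V)) :
    ∑ v, ((degree A v : ℝ) - degree B v) ^ 2 = ∑ e ∈ A, ∑ f ∈ A, (#(e ∩ f) : ℝ)
      + ∑ e ∈ B, ∑ f ∈ B, (#(e ∩ f) : ℝ) - 2 * ∑ e ∈ A, ∑ f ∈ B, (#(e ∩ f) : ℝ) := by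
  have hcast (A B : Finset (Finset V)) :
      ∑ e ∈ A, ∑ f ∈ B, (#(e ∩ f) : ℝ) = ∑ v, (degree A v : ℝ) * degree B v := by
    exact_mod_cast sum_sum_card_inter_eq_sum_degree_mul A B
  rw [hcast, hcast, hcast, ← sum_add_distrib, mul_sum, ← sum_sub_distrib]
  exact sum_congr rfl fun v _ => by ring

lemma card_mul_sq_le_sum_sq_degree_sub_degree {A B : Finset (Finset V)} {W : Finset V}
    (hA : ∀ e ∈ A, W ⊆ e) (hB : ∀ f ∈ B, Disjoint W f) :
    (#W * #A ^ 2 : ℝ) ≤ ∑ v, ((degree A v : ℝ) - degree B v) ^ 2 := by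
  have hW : ∀ v ∈ W, ((degree A v : ℝ) - degree B v) ^ 2 = #A ^ 2 := by
    intro v hv
    have hdA : degree A v = #A := by
      rw [degree, filter_true_of_mem fun e he => hA e he hv]
    have hdB : degree B v = 0 := by
      rw [degree, card_eq_zero, filter_eq_empty_iff]
      exact fun f hf => disjoint_left.mp (hB f hf) hv
    rw [hdA, hdB, Nat.cast_zero, sub_zero]
  calc (#W * #A ^ 2 : ℝ) = ∑ v ∈ W, ((degree A v : ℝ) - degree B v) ^ 2 := by
        rw [sum_congr rfl hW, sum_const, nsmul_eq_mul]
    _ ≤ _ := sum_le_univ_sum_of_nonneg fun _ => sq_nonneg _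

theorem two_mul_sum_sum_card_inter_add_le {A B : Finset (Finset V)} {W : Finset V}
    (hA : ∀ e ∈ A, W ⊆ e) (hB : ∀ f ∈ B, Disjoint W f) :
    2 * ∑ e ∈ A, ∑ f ∈ B, (#(e ∩ f) : ℝ) + #W * #A ^ 2
      ≤ ∑ p ∈ A.offDiag, (#(p.1 ∩ p.2) : ℝ) + ∑ p ∈ B.offDiag, (#(p.1 ∩ p.2) : ℝ)
        + ∑ e ∈ A, (#e : ℝ) + ∑ f ∈ B, (#f : ℝ) := by
  have h := card_mul_sq_le_sum_sq_degree_sub_degree hA hB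
  have hAA : ∑ e ∈ A, ∑ f ∈ A, (#(e ∩ f) : ℝ)
      = ∑ p ∈ A.offDiag, (#(p.1 ∩ p.2) : ℝ) + ∑ e ∈ A, (#e : ℝ) := by
    exact_mod_cast sum_sum_card_inter_self A
  have hBB : ∑ e ∈ B, ∑ f ∈ B, (#(e ∩ f) : ℝ)
      = ∑ p ∈ B.offDiag, (#(p.1 ∩ p.2) : ℝ) + ∑ f ∈ B, (#f : ℝ) := by
    exact_mod_cast sum_sum_card_inter_self B
  rw [sum_sq_degree_sub_degree] at h
  linarith

end Finset

lemma cast_choose_two_two_mul (s : ℕ) : ((2 * s).choose 2 : ℝ) = s * (2 * s - 1) := by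
  rw [Nat.cast_choose_two]
  push_cast
  ring

lemma sq_div_choose_two_two_mul_mul {s : ℕ} (hs : 1 ≤ s) :
    (s : ℝ) ^ 2 / (2 * s).choose 2 * (2 * s * (2 * s - 1)) = 2 * s ^ 2 := by
  have hs' : (1 : ℝ) ≤ s := by exact_mod_cast hs
  rw [cast_choose_two_two_mul, div_mul_eq_mul_div, div_eq_iff (by nlinarith)]
  ring

lemma one_div_four_lt_sq_div_choose_two_two_mul {s : ℕ} (hs : 1 ≤ s) :
    1 / 4 < (s : ℝ) ^ 2 / (2 * s).choose 2 := by
  have hs' : (1 : ℝ) ≤ s := by exact_mod_cast hs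
  rw [cast_choose_two_two_mul, lt_div_iff₀ (by nlinarith)]
  nlinarith

theorem stmt_12_general {V : Type*} [Fintype V] [DecidableEq V]
    (H : Finset (Finset V)) (k s t lam : ℕ)
    (hst : t = 2 * s) (hk : 1 ≤ k)
    (hunif : ∀ e ∈ H, e.card = k)
    (S T : Finset (Finset V)) (hSH : S ⊆ H) (hTH : T ⊆ H) (hdisj : Disjoint S T)
    (hScard : S.card = s) (hTcard : T.card = s)
    (W : Finset V) (hWcard : W.card = 10 * t)
    (hWS : ∀ e ∈ S, W ⊆ e) (hWT : ∀ e ∈ T, Disjoint W e)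
    (hSsmall : ∀ e ∈ S, ∀ f ∈ S, e ≠ f → (e ∩ f).card ≤ lam)
    (hTsmall : ∀ e ∈ T, ∀ f ∈ T, e ≠ f → (e ∩ f).card ≤ lam)
    (hts : (t : ℝ) ≥ 2 * ⌈Real.sqrt k⌉₊) :
    (∑ e ∈ S, ∑ f ∈ T, ((e ∩ f).card : ℝ)) / (s * s) ≤ (lam : ℝ) - 8 * Real.sqrt k ∧
    (∑ p ∈ (S ∪ T).offDiag, ((p.1 ∩ p.2).card : ℝ)) / ((2 * s) * (2 * s - 1))
      ≤ (lam : ℝ) - ((s : ℝ) ^ 2 / ((2 * s).choose 2 : ℝ)) * (8 * Real.sqrt k) ∧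
    (lam : ℝ) - ((s : ℝ) ^ 2 / ((2 * s).choose 2 : ℝ)) * (8 * Real.sqrt k)
      < (lam : ℝ) - 2 * Real.sqrt k := by
  have hsqrt_one : 1 ≤ √(k : ℝ) := Real.one_le_sqrt.2 (by exact_mod_cast hk)
  have hsqrt_le : √(k : ℝ) ≤ s := by
    have hst' : (t : ℝ) = 2 * s := by exact_mod_cast hst
    linarith [Nat.le_ceil √(k : ℝ)]
  have hs : 1 ≤ s := by exact_mod_cast hsqrt_one.trans hsqrt_le
  have hsize {A : Finset (Finset V)} (hA : A ⊆ H) : ∑ e ∈ A, (#e : ℝ) = #A * k := by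
    exact_mod_cast sum_const_nat fun e he => hunif e (hA he)
  have hkey := two_mul_sum_sum_card_inter_add_le hWS hWT
  have hS := sum_offDiag_card_inter_le hSsmall
  have hT := sum_offDiag_card_inter_le hTsmall
  rw [hsize hSH, hsize hTH, hWcard, hst, hScard, hTcard] at hkey
  rw [hScard] at hS
  rw [hTcard] at hT
  have hcross : ∑ e ∈ S, ∑ f ∈ T, (#(e ∩ f) : ℝ) ≤ (lam - 8 * √(k : ℝ)) * (s * s) := by
    have hk' : √(k : ℝ) ^ 2 = k := Real.sq_sqrt (Nat.cast_nonneg _)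
    push_cast at hkey
    nlinarith [mul_le_mul_of_nonneg_left hsqrt_le (Nat.cast_nonneg s),
      Nat.cast_nonneg (α := ℝ) lam]
  have hunion : ∑ p ∈ (S ∪ T).offDiag, (#(p.1 ∩ p.2) : ℝ) = ∑ p ∈ S.offDiag, (#(p.1 ∩ p.2) : ℝ)
      + ∑ p ∈ T.offDiag, (#(p.1 ∩ p.2) : ℝ) + 2 * ∑ e ∈ S, ∑ f ∈ T, (#(e ∩ f) : ℝ) := by
    exact_mod_cast sum_offDiag_card_inter_union hdisj
  have hs' : (1 : ℝ) ≤ s := by exact_mod_cast hs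
  refine ⟨(div_le_iff₀ (by positivity)).2 hcross, ?_, ?_⟩
  · rw [hunion, div_le_iff₀ (by nlinarith), sub_mul, mul_right_comm ((s : ℝ) ^ 2 / _),
      sq_div_choose_two_two_mul_mul hs]
    nlinarith
  · nlinarith [one_div_four_lt_sq_div_choose_two_two_mul hs]

/-- Final step of the proof of the main theorem: `S`, `T` are disjoint sets of edges of a
`k`-uniform hypergraph, each of size `s = t/2` with `t ≥ 18`, `k ≥ 1`, there is a set of
`x = 10t` vertices contained in every edge of `S` and disjoint from every edge of `T`, and
all pairwise intersections within `S` and within `T` have size at most `λ`. If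
`t ≥ 2⌈√k⌉`, then `λ_{S,T} ≤ λ − 8√k`, and consequently
`λ_{S∪T} ≤ λ − (s²/C(2s,2))·8√k < λ − 2√k`. -/
theorem stmt_12 {V : Type*} [Fintype V] [DecidableEq V]
    (H : Finset (Finset V)) (k s t lam : ℕ)
    (hst : t = 2 * s) (ht18 : 18 ≤ t) (hk : 1 ≤ k)
    (hunif : ∀ e ∈ H, e.card = k)
    (S T : Finset (Finset V)) (hSH : S ⊆ H) (hTH : T ⊆ H) (hdisj : Disjoint S T)
    (hScard : S.card = s) (hTcard : T.card = s)
    (W : Finset V) (hWcard : W.card = 10 * t)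
    (hWS : ∀ e ∈ S, W ⊆ e) (hWT : ∀ e ∈ T, Disjoint W e)
    (hSsmall : ∀ e ∈ S, ∀ f ∈ S, e ≠ f → (e ∩ f).card ≤ lam)
    (hTsmall : ∀ e ∈ T, ∀ f ∈ T, e ≠ f → (e ∩ f).card ≤ lam)
    (hts : (t : ℝ) ≥ 2 * ⌈Real.sqrt k⌉₊) :
    (∑ e ∈ S, ∑ f ∈ T, ((e ∩ f).card : ℝ)) / (s * s) ≤ (lam : ℝ) - 8 * Real.sqrt k ∧
    (∑ p ∈ (S ∪ T).offDiag, ((p.1 ∩ p.2).card : ℝ)) / ((2 * s) * (2 * s - 1))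
      ≤ (lam : ℝ) - ((s : ℝ) ^ 2 / ((2 * s).choose 2 : ℝ)) * (8 * Real.sqrt k) ∧
    (lam : ℝ) - ((s : ℝ) ^ 2 / ((2 * s).choose 2 : ℝ)) * (8 * Real.sqrt k)
      < (lam : ℝ) - 2 * Real.sqrt k :=
  stmt_12_general H k s t lam hst hk hunif S T hSH hTH hdisj hScard hTcard W hWcard hWS hWT hSsmall
    hTsmall hts
end

section
/- Let H be a k-uniform, 3-chromatic, intersecting hypergraph with k sufficiently large. Then H contains two distinct edges whose intersection has size at least c·k/log k for some absolute constant c > 0, i.e., max I(H) = Ω(k/log k). -/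
/-!
Pass to a critical subfamily `H'` and an edge `e₀ ∈ H'`. Among the proper 2-colorings
(blue = `true`, red = `false`) of `H' \ {e₀}` in which `e₀` is blue, take one with the most blue
vertices. Recoloring a vertex `u ∈ e₀` red must create a monochromatic edge, so some edge `F u` has
`u` as its only blue vertex; recoloring a red vertex `w` blue must do the same (by maximality), so
some edge `G w ≠ e₀` has `w` as its only red vertex. As `F u` meets `G w`, either `u ∈ G w` or
`w ∈ F u`; if all intersections have at most `k/4` vertices, each red vertex lies in at least
`3k/4` of the `k` stars, and double counting bounds the number of red vertices by `4(k-1)/3`.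
But two stars `F u`, `F u'` consist of red vertices and one blue vertex each, so they would share
at least `2k - 2 - 4(k-1)/3 > k/4` vertices. Hence some intersection is in fact linear in `k`.
-/

open Finset

section Bicoloring

variable {V : Type*}

def IsProperBicoloring (H : Finset (Finset V)) (c : V → Bool) : Prop :=
  ∀ e ∈ H, ∃ u ∈ e, ∃ v ∈ e, c u ≠ c v

def IsMonochromatic (c : V → Bool) (e : Finset V) : Prop :=
  ∀ u ∈ e, ∀ v ∈ e, c u = c v

variable {H G : Finset (Finset V)} {c : V → Bool} {e : Finset V} {u : V}

lemma eq_of_filter_eq_singleton {s : Finset V} {p : V → Prop} [DecidablePred p] {a x : V}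
    (h : s.filter p = {a}) (hx : x ∈ s) (hpx : p x) : x = a :=
  mem_singleton.1 (h ▸ mem_filter.2 ⟨hx, hpx⟩)

lemma IsProperBicoloring.not_isMonochromatic (hc : IsProperBicoloring H c) (he : e ∈ H) :
    ¬ IsMonochromatic c e := by
  obtain ⟨u, hu, v, hv, huv⟩ := hc e he
  exact fun h => huv (h u hu v hv)

lemma exists_isMonochromatic_of_not_isProperBicoloring (hc : ¬ IsProperBicoloring H c) :
    ∃ e ∈ H, IsMonochromatic c e := by
  simpa [IsProperBicoloring, IsMonochromatic] using hc

lemma isProperBicoloring_not_iff :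
    IsProperBicoloring H (fun x => !c x) ↔ IsProperBicoloring H c := by
  simp [IsProperBicoloring]

lemma nonempty_of_not_bicolorable (hH : ¬ ∃ c, IsProperBicoloring H c) : H.Nonempty := by
  rw [nonempty_iff_ne_empty]
  rintro rfl
  exact hH ⟨fun _ => true, by simp [IsProperBicoloring]⟩

variable [DecidableEq V]

lemma exists_critical_subfamily (hH : ¬ ∃ c, IsProperBicoloring H c) :
    ∃ H' ⊆ H, (¬ ∃ c, IsProperBicoloring H' c) ∧
      ∀ e ∈ H', ∃ c, IsProperBicoloring (H'.erase e) c := by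
  obtain ⟨H', hH'H, hH', hmin⟩ :=
    exists_minimal_le_of_wellFoundedLT (fun G => ¬ ∃ c, IsProperBicoloring G c) H hH
  refine ⟨H', hH'H, hH', fun e he => ?_⟩
  by_contra h
  simpa using hmin h (erase_subset e H') he

lemma mem_of_isMonochromatic_update {b : Bool} (hc : ¬ IsMonochromatic c e)
    (h : IsMonochromatic (Function.update c u b) e) : u ∈ e := by
  by_contra hu
  refine hc fun x hx y hy => ?_
  have hxu : x ≠ u := ne_of_mem_of_not_mem hx hu
  have hyu : y ≠ u := ne_of_mem_of_not_mem hy hu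
  simpa [Function.update_of_ne hxu, Function.update_of_ne hyu] using h x hx y hy

lemma filter_eq_singleton_of_isMonochromatic_flip (hu : u ∈ e)
    (h : IsMonochromatic (Function.update c u (!c u)) e) : e.filter (c · = c u) = {u} := by
  ext x
  simp only [mem_filter, mem_singleton]
  refine ⟨fun ⟨hx, hxu⟩ => ?_, by rintro rfl; exact ⟨hu, rfl⟩⟩
  by_contra hne
  have := h x hx u hu
  simp [Function.update_of_ne hne, hxu] at this

lemma exists_filter_eq_singleton_of_flip (hc : IsProperBicoloring G c)
    (hflip : ¬ IsProperBicoloring G (Function.update c u (!c u))) :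
    ∃ f ∈ G, f.filter (c · = c u) = {u} := by
  obtain ⟨f, hf, hmono⟩ := exists_isMonochromatic_of_not_isProperBicoloring hflip
  exact ⟨f, hf, filter_eq_singleton_of_isMonochromatic_flip
    (mem_of_isMonochromatic_update (hc.not_isMonochromatic hf) hmono) hmono⟩

lemma isMonochromatic_of_not_bicolorable (hH : ¬ ∃ c, IsProperBicoloring H c) {e₀ : Finset V}
    (hc : IsProperBicoloring (H.erase e₀) c) : IsMonochromatic c e₀ := by
  obtain ⟨e, he, hmono⟩ := exists_isMonochromatic_of_not_isProperBicoloring fun h => hH ⟨c, h⟩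
  by_cases hee₀ : e = e₀
  · exact hee₀ ▸ hmono
  · exact absurd hmono (hc.not_isMonochromatic (mem_erase.2 ⟨hee₀, he⟩))

lemma exists_star (hH : ¬ ∃ c, IsProperBicoloring H c) {e₀ : Finset V}
    (hc : IsProperBicoloring (H.erase e₀) c) (hu : u ∈ e₀) :
    ∃ f ∈ H, f.filter (c · = c u) = {u} := by
  obtain ⟨f, hf, hmono⟩ := exists_isMonochromatic_of_not_isProperBicoloring
    fun h => hH ⟨Function.update c u (!c u), h⟩
  have huf : u ∈ f := by
    by_cases hfe₀ : f = e₀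
    · exact hfe₀ ▸ hu
    · exact mem_of_isMonochromatic_update (hc.not_isMonochromatic (mem_erase.2 ⟨hfe₀, hf⟩)) hmono
  exact ⟨f, hf, filter_eq_singleton_of_isMonochromatic_flip huf hmono⟩

end Bicoloring

section Extremal

variable {V : Type*} [Fintype V] [DecidableEq V] {H : Finset (Finset V)} {e₀ : Finset V}

lemma exists_extremal_coloring (hH : ¬ ∃ c, IsProperBicoloring H c)
    (hcrit : ∃ c, IsProperBicoloring (H.erase e₀) c) :
    ∃ χ, IsProperBicoloring (H.erase e₀) χ ∧ (∀ x ∈ e₀, χ x = true) ∧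
      ∀ ψ, IsProperBicoloring (H.erase e₀) ψ → (∀ x ∈ e₀, ψ x = true) →
        #{x | ψ x = true} ≤ #{x | χ x = true} := by
  classical
  have hblue : ∃ c, IsProperBicoloring (H.erase e₀) c ∧ ∀ x ∈ e₀, c x = true := by
    obtain ⟨c, hc⟩ := hcrit
    have hmono := isMonochromatic_of_not_bicolorable hH hc
    rcases e₀.eq_empty_or_nonempty with rfl | ⟨v, hv⟩
    · exact ⟨c, hc, by simp⟩
    cases hcv : c v
    · exact ⟨(!c ·), isProperBicoloring_not_iff.2 hc, fun x hx => by simp [hmono x hx v hv, hcv]⟩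
    · exact ⟨c, hc, fun x hx => (hmono x hx v hv).trans hcv⟩
  obtain ⟨χ, hχ, hmax⟩ := exists_max_image
    (univ.filter fun ψ => IsProperBicoloring (H.erase e₀) ψ ∧ ∀ x ∈ e₀, ψ x = true)
    (fun ψ => #{x | ψ x = true})
    (by simpa [Finset.Nonempty] using hblue)
  simp only [mem_filter, mem_univ, true_and, and_imp] at hχ hmax
  exact ⟨χ, hχ.1, hχ.2, hmax⟩

/-- Maximality of the number of blue vertices forbids recolouring a red vertex blue. -/
lemma exists_costar {χ : V → Bool} (hχ : IsProperBicoloring (H.erase e₀) χ)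
    (hblue : ∀ x ∈ e₀, χ x = true)
    (hmax : ∀ ψ, IsProperBicoloring (H.erase e₀) ψ → (∀ x ∈ e₀, ψ x = true) →
      #{x | ψ x = true} ≤ #{x | χ x = true})
    {w : V} (hw : χ w = false) : ∃ g ∈ H.erase e₀, g.filter (χ · = false) = {w} := by
  have hwe₀ : w ∉ e₀ := fun h => by simp [hblue w h] at hw
  have hflip : ¬ IsProperBicoloring (H.erase e₀) (Function.update χ w (!χ w)) := by
    intro hψ
    have hle := hmax _ hψ fun x hx => by
      rw [Function.update_of_ne (ne_of_mem_of_not_mem hx hwe₀)]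
      exact hblue x hx
    have hinsert : univ.filter (Function.update χ w (!χ w) · = true)
        = insert w (univ.filter (χ · = true)) := by
      ext x
      by_cases hxw : x = w <;> simp [hxw, hw, Function.update_of_ne]
    rw [hinsert, card_insert_of_notMem (by simp [hw])] at hle
    omega
  simpa [hw] using exists_filter_eq_singleton_of_flip hχ hflip

end Extremal

section Counting

variable {V : Type*} [DecidableEq V] {χ : V → Bool} {e₀ g : Finset V} {F : V → Finset V}

lemma card_le_card_filter_mem_add_card_inter (hF : ∀ u ∈ e₀, (F u).filter (χ · = true) = {u})
    {w : V} (hg : g.filter (χ · = false) = {w}) (hmeet : ∀ u ∈ e₀, (F u ∩ g).Nonempty) :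
    #e₀ ≤ #(e₀.filter (w ∈ F ·)) + #(e₀ ∩ g) := by
  have hcover : e₀ ⊆ e₀.filter (w ∈ F ·) ∪ e₀ ∩ g := by
    intro u hu
    obtain ⟨x, hx⟩ := hmeet u hu
    rw [mem_inter] at hx
    cases hxχ : χ x
    · obtain rfl := eq_of_filter_eq_singleton hg hx.2 hxχ
      exact mem_union_left _ (mem_filter.2 ⟨hu, hx.1⟩)
    · obtain rfl := eq_of_filter_eq_singleton (hF u hu) hx.1 hxχ
      exact mem_union_right _ (mem_inter.2 ⟨hu, hx.2⟩)
  exact (card_le_card hcover).trans (card_union_le _ _)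

variable [Fintype V]

lemma sum_card_filter_mem_eq (hF : ∀ u ∈ e₀, (F u).filter (χ · = true) = {u})
    {k : ℕ} (hFk : ∀ u ∈ e₀, #(F u) = k) :
    ∑ w ∈ univ.filter (χ · = false), #(e₀.filter (w ∈ F ·)) = #e₀ * (k - 1) := by
  have hred : ∀ u ∈ e₀, #((univ.filter (χ · = false)).filter (· ∈ F u)) = k - 1 := by
    intro u hu
    have hsplit := card_filter_add_card_filter_not (s := F u) (χ · = true)
    rw [hF u hu, hFk u hu, card_singleton] at hsplit
    rw [← hsplit, add_tsub_cancel_left]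
    congr 1
    ext x
    simp [and_comm]
  calc ∑ w ∈ univ.filter (χ · = false), #(e₀.filter (w ∈ F ·))
      = ∑ u ∈ e₀, #((univ.filter (χ · = false)).filter (· ∈ F u)) :=
        (sum_card_bipartiteAbove_eq_sum_card_bipartiteBelow _).symm
    _ = #e₀ * (k - 1) := by rw [sum_congr rfl hred, sum_const, smul_eq_mul]

lemma subset_insert_filter_false (hF : ∀ u ∈ e₀, (F u).filter (χ · = true) = {u}) {u : V}
    (hu : u ∈ e₀) : F u ⊆ insert u (univ.filter (χ · = false)) := by
  intro x hx
  cases hxχ : χ x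
  · exact mem_insert_of_mem (by simpa using hxχ)
  · obtain rfl := eq_of_filter_eq_singleton (hF u hu) hx hxχ
    exact mem_insert_self _ _

lemma card_union_le_card_filter_false_add_two (hF : ∀ u ∈ e₀, (F u).filter (χ · = true) = {u})
    {u u' : V} (hu : u ∈ e₀) (hu' : u' ∈ e₀) :
    #(F u ∪ F u') ≤ #(univ.filter (χ · = false)) + 2 := by
  have hsub : F u ∪ F u' ⊆ insert u (insert u' (univ.filter (χ · = false))) :=
    union_subset
      ((subset_insert_filter_false hF hu).trans (insert_subset_insert _ (subset_insert _ _)))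
      ((subset_insert_filter_false hF hu').trans (subset_insert _ _))
  calc #(F u ∪ F u') ≤ #(insert u (insert u' (univ.filter (χ · = false)))) := card_le_card hsub
    _ ≤ #(univ.filter (χ · = false)) + 2 := by
      have := card_insert_le u (insert u' (univ.filter (χ · = false)))
      have := card_insert_le u' (univ.filter (χ · = false))
      omega

end Counting

section Configuration

variable {V : Type*} [Fintype V] [DecidableEq V] {H : Finset (Finset V)} {k : ℕ} {χ : V → Bool}
  {e₀ : Finset V} {F G : V → Finset V}

lemma mul_card_filter_false_le_of_costars (hunif : ∀ e ∈ H, #e = k)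
    (hint : ∀ e ∈ H, ∀ f ∈ H, (e ∩ f).Nonempty)
    (hsmall : ∀ e ∈ H, ∀ f ∈ H, e ≠ f → 4 * #(e ∩ f) ≤ k) (he₀ : e₀ ∈ H)
    (hFH : ∀ u ∈ e₀, F u ∈ H) (hF : ∀ u ∈ e₀, (F u).filter (χ · = true) = {u})
    (hGH : ∀ w, χ w = false → G w ∈ H.erase e₀)
    (hG : ∀ w, χ w = false → (G w).filter (χ · = false) = {w}) :
    3 * k * #(univ.filter (χ · = false)) ≤ 4 * (k * (k - 1)) := by
  have hdeg : ∀ w ∈ univ.filter (χ · = false), 3 * k ≤ 4 * #(e₀.filter (w ∈ F ·)) := by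
    intro w hw
    replace hw : χ w = false := (mem_filter.1 hw).2
    obtain ⟨hGe₀, hGH⟩ := mem_erase.1 (hGH w hw)
    have hcover := card_le_card_filter_mem_add_card_inter hF (hG w hw)
      fun u hu => hint _ (hFH u hu) _ hGH
    have := hsmall e₀ he₀ (G w) hGH hGe₀.symm
    rw [hunif e₀ he₀] at hcover
    omega
  calc 3 * k * #(univ.filter (χ · = false))
      = ∑ w ∈ univ.filter (χ · = false), 3 * k := by rw [sum_const, smul_eq_mul, mul_comm]
    _ ≤ ∑ w ∈ univ.filter (χ · = false), 4 * #(e₀.filter (w ∈ F ·)) := sum_le_sum hdeg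
    _ = 4 * (k * (k - 1)) := by
      rw [← mul_sum, sum_card_filter_mem_eq hF fun u hu => hunif _ (hFH u hu), hunif e₀ he₀]

lemma le_card_filter_false_of_stars (hunif : ∀ e ∈ H, #e = k)
    (hsmall : ∀ e ∈ H, ∀ f ∈ H, e ≠ f → 4 * #(e ∩ f) ≤ k)
    (hFH : ∀ u ∈ e₀, F u ∈ H) (hF : ∀ u ∈ e₀, (F u).filter (χ · = true) = {u})
    {u u' : V} (hu : u ∈ e₀) (hu' : u' ∈ e₀) (huu' : u ≠ u') :
    7 * k ≤ 4 * #(univ.filter (χ · = false)) + 8 := by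
  have hFF : F u ≠ F u' := fun h => huu' (singleton_inj.1 ((hF u hu).symm.trans (h ▸ hF u' hu')))
  have hunion := card_union_le_card_filter_false_add_two hF hu hu'
  have hinter := hsmall _ (hFH u hu) _ (hFH u' hu') hFF
  have := card_union_add_card_inter (F u) (F u')
  rw [hunif _ (hFH u hu), hunif _ (hFH u' hu')] at this
  omega

end Configuration

theorem exists_lt_four_mul_card_inter {V : Type*} [Fintype V] [DecidableEq V] {k : ℕ}
    (hk : 2 ≤ k) {H : Finset (Finset V)} (hunif : ∀ e ∈ H, #e = k)
    (hH : ¬ ∃ c, IsProperBicoloring H c) (hint : ∀ e ∈ H, ∀ f ∈ H, (e ∩ f).Nonempty) :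
    ∃ e ∈ H, ∃ f ∈ H, e ≠ f ∧ k < 4 * #(e ∩ f) := by
  by_contra! hsmall
  obtain ⟨H', hH'H, hH', hcrit⟩ := exists_critical_subfamily hH
  replace hunif : ∀ e ∈ H', #e = k := fun e he => hunif e (hH'H he)
  replace hint : ∀ e ∈ H', ∀ f ∈ H', (e ∩ f).Nonempty :=
    fun e he f hf => hint e (hH'H he) f (hH'H hf)
  replace hsmall : ∀ e ∈ H', ∀ f ∈ H', e ≠ f → 4 * #(e ∩ f) ≤ k :=
    fun e he f hf => hsmall e (hH'H he) f (hH'H hf)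
  obtain ⟨e₀, he₀⟩ := nonempty_of_not_bicolorable hH'
  obtain ⟨χ, hχ, hblue, hmax⟩ := exists_extremal_coloring hH' (hcrit e₀ he₀)
  have hstar : ∀ u ∈ e₀, ∃ f ∈ H', f.filter (χ · = true) = {u} := fun u hu => by
    simpa [hblue u hu] using exists_star hH' hχ hu
  choose! F hFH hF using hstar
  choose! G hGH hG using fun w (hw : χ w = false) => exists_costar hχ hblue hmax hw
  obtain ⟨u, hu, u', hu', huu'⟩ := one_lt_card.1 (by rw [hunif e₀ he₀]; omega)
  have hupper := mul_card_filter_false_le_of_costars hunif hint hsmall he₀ hFH hF hGH hG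
  have hlower := Nat.mul_le_mul_left (3 * k)
    (le_card_filter_false_of_stars hunif hsmall hFH hF hu hu' huu')
  zify [show 1 ≤ k by omega] at hupper hlower
  nlinarith

/-- Erdős–Lovász–Shelah: there is an absolute constant `c > 0` such that every `k`-uniform,
3-chromatic (not 2-colorable), intersecting hypergraph with `k` sufficiently large contains
two distinct edges intersecting in at least `c·k/log k` vertices. -/
theorem stmt_18 :
    ∃ c : ℝ, 0 < c ∧ ∃ k₀ : ℕ, ∀ k : ℕ, k₀ ≤ k →
      ∀ (V : Type) [Fintype V] [DecidableEq V] (H : Finset (Finset V)),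
        (∀ e ∈ H, e.card = k) →
        (¬ ∃ c' : V → Bool, ∀ e ∈ H, ∃ u ∈ e, ∃ v ∈ e, c' u ≠ c' v) →
        (∀ e ∈ H, ∀ f ∈ H, (e ∩ f).Nonempty) →
        ∃ e ∈ H, ∃ f ∈ H, e ≠ f ∧ ((e ∩ f).card : ℝ) ≥ c * k / Real.log k := by
  refine ⟨1 / 4, by norm_num, 3, fun k hk V _ _ H hunif hH hint => ?_⟩
  obtain ⟨e, he, f, hf, hef, hlt⟩ := exists_lt_four_mul_card_inter (by omega) hunif hH hint
  have hk3 : (3 : ℝ) ≤ k := by exact_mod_cast hk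
  have hlog : 1 ≤ Real.log k := by
    rw [Real.le_log_iff_exp_le (by linarith)]
    linarith [Real.exp_one_lt_d9]
  have hlt' : (k : ℝ) < 4 * #(e ∩ f) := by exact_mod_cast hlt
  refine ⟨e, he, f, hf, hef, ?_⟩
  calc 1 / 4 * k / Real.log k ≤ 1 / 4 * k := div_le_self (by positivity) hlog
    _ ≤ #(e ∩ f) := by linarith
end

section
/- For every n that is a power of 3 there exists an n-uniform, intersecting, non-2-colorable hypergraph with 7^{(n−1)/2} edges, whose intersection spectrum consists only of odd numbers between 1 and n−2. -/
/-!
Replace every point of the Fano plane by a copy of an `m`-uniform family `H`: an edge of the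
blow-up is a Fano line together with an edge of `H` placed in the copy over each of its three
points. Two distinct lines meet in exactly one point, so edges over distinct lines meet in a
single copy, in an intersection of two edges of `H`; edges over the same line meet in three
copies, a sum of three odd numbers at most `m`, one of them at most `m - 2`. A 2-colouring of
the blow-up has a monochromatic edge of `H` in each copy; their colours 2-colour the Fano plane,
and a monochromatic line lifts to a monochromatic edge. Iterating from a single vertex gives
`n = 3 ^ j`, with `7 * (7 ^ ((m - 1) / 2)) ^ 3 = 7 ^ ((3m - 1) / 2)` edges at each step.
-/

open Finset Function

namespace FanoBlowup

variable {V W : Type*} [DecidableEq V] [DecidableEq W] {k : ℕ}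

lemma odd_sum_and_sum_le_mul_sub_two {m : ℕ} (hk : Odd k) {a : Fin k → ℕ}
    (ha : ∀ i, Odd (a i) ∧ a i ≤ m) {i₀ : Fin k} (hi₀ : a i₀ ≤ m - 2) :
    Odd (∑ i, a i) ∧ ∑ i, a i ≤ k * m - 2 := by
  refine ⟨?_, ?_⟩
  · rw [odd_sum_iff_odd_card_odd, filter_true_of_mem fun i _ => (ha i).1, card_univ,
      Fintype.card_fin]
    exact hk
  · have hrest : ∑ i ∈ univ.erase i₀, a i ≤ (k - 1) * m := by
      simpa using sum_le_card_nsmul (univ.erase i₀) a m fun i _ => (ha i).2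
    have hpos := (ha i₀).1.pos
    have hk1 : 1 ≤ k := hk.pos
    rw [← add_sum_erase _ _ (mem_univ i₀)]
    have : (k - 1) * m + m = k * m := by rw [← Nat.add_one_mul, Nat.sub_add_cancel hk1]
    omega

def lineEdge (ℓ : Fin k → W) (ε : Fin k → Finset V) : Finset (V × W) :=
  univ.biUnion fun i => ε i ×ˢ {ℓ i}

section lineEdge

variable {ℓ ℓ' : Fin k → W} {ε ε' : Fin k → Finset V}

lemma mem_lineEdge {v : V} {w : W} : (v, w) ∈ lineEdge ℓ ε ↔ ∃ i, v ∈ ε i ∧ w = ℓ i := by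
  simp [lineEdge, eq_comm]

lemma mk_mem_lineEdge (hℓ : Injective ℓ) {v : V} {i : Fin k} :
    (v, ℓ i) ∈ lineEdge ℓ ε ↔ v ∈ ε i := by
  simp [mem_lineEdge, hℓ.eq_iff]

lemma card_lineEdge (hℓ : Injective ℓ) : #(lineEdge ℓ ε) = ∑ i, #(ε i) := by
  rw [lineEdge, card_biUnion]
  · simp
  · intro i _ j _ hij
    simp [disjoint_left, hℓ.eq_iff, hij.symm]

lemma lineEdge_inter_lineEdge_self (hℓ : Injective ℓ) :
    lineEdge ℓ ε ∩ lineEdge ℓ ε' = lineEdge ℓ fun i => ε i ∩ ε' i := by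
  ext ⟨v, w⟩
  simp only [mem_inter, mem_lineEdge]
  constructor
  · rintro ⟨⟨i, hv, rfl⟩, j, hv', hij⟩
    obtain rfl := hℓ hij
    exact ⟨i, ⟨hv, hv'⟩, rfl⟩
  · rintro ⟨i, hv, rfl⟩
    exact ⟨⟨i, hv.1, rfl⟩, i, hv.2, rfl⟩

lemma lineEdge_inter_lineEdge_of_meet {i i' : Fin k}
    (hmeet : ∀ j j', ℓ j = ℓ' j' ↔ j = i ∧ j' = i') :
    lineEdge ℓ ε ∩ lineEdge ℓ' ε' = (ε i ∩ ε' i') ×ˢ {ℓ i} := by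
  ext ⟨v, w⟩
  simp only [mem_inter, mem_lineEdge, mem_product, mem_singleton]
  constructor
  · rintro ⟨⟨j, hv, rfl⟩, j', hv', hjj'⟩
    obtain ⟨rfl, rfl⟩ := (hmeet j j').1 hjj'
    exact ⟨⟨hv, hv'⟩, rfl⟩
  · rintro ⟨⟨hv, hv'⟩, rfl⟩
    exact ⟨⟨i, hv, rfl⟩, i', hv', ((hmeet i i').2 ⟨rfl, rfl⟩)⟩

lemma image_snd_lineEdge (hε : ∀ i, (ε i).Nonempty) :
    (lineEdge ℓ ε).image Prod.snd = univ.image ℓ := by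
  ext w
  simp only [mem_image, Prod.exists, mem_lineEdge, mem_univ, true_and]
  constructor
  · rintro ⟨v, w, ⟨i, -, rfl⟩, rfl⟩
    exact ⟨i, rfl⟩
  · rintro ⟨i, rfl⟩
    obtain ⟨v, hv⟩ := hε i
    exact ⟨v, ℓ i, ⟨i, hv, rfl⟩, rfl⟩

lemma lineEdge_injective (hℓ : Injective ℓ) : Injective (lineEdge (V := V) ℓ) := by
  intro ε ε' h
  ext i v
  rw [← mk_mem_lineEdge hℓ, h, mk_mem_lineEdge hℓ]

end lineEdge

def IsNonTwoColorable (H : Finset (Finset V)) : Prop :=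
  ∀ c : V → Bool, ∃ e ∈ H, ∃ b, ∀ v ∈ e, c v = b

def blowup (L : Finset (Fin k → W)) (H : Finset (Finset V)) : Finset (Finset (V × W)) :=
  (L ×ˢ Fintype.piFinset fun _ => H).image fun p => lineEdge p.1 p.2

section blowup

variable {L : Finset (Fin k → W)} {H : Finset (Finset V)} {m : ℕ}

lemma mem_blowup {e : Finset (V × W)} :
    e ∈ blowup L H ↔ ∃ ℓ ∈ L, ∃ ε : Fin k → Finset V, (∀ i, ε i ∈ H) ∧ lineEdge ℓ ε = e := by
  simp [blowup, and_assoc]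

lemma card_blowup (hL : ∀ ℓ ∈ L, Injective ℓ)
    (hL' : ∀ ℓ ∈ L, ∀ ℓ' ∈ L, univ.image ℓ = univ.image ℓ' → ℓ = ℓ')
    (hH : ∀ e ∈ H, e.Nonempty) :
    #(blowup L H) = #L * #H ^ k := by
  rw [blowup, card_image_of_injOn, card_product, Fintype.card_piFinset_const]
  rintro ⟨ℓ, ε⟩ hε ⟨ℓ', ε'⟩ hε' h
  simp only [coe_product, Set.mem_prod, mem_coe, Fintype.mem_piFinset] at hε hε' h
  obtain rfl : ℓ = ℓ' := hL' ℓ hε.1 ℓ' hε'.1 <| by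
    rw [← image_snd_lineEdge fun i => hH _ (hε.2 i), h,
      image_snd_lineEdge fun i => hH _ (hε'.2 i)]
  rw [lineEdge_injective (hL ℓ hε.1) h]

lemma blowup_uniform (hL : ∀ ℓ ∈ L, Injective ℓ) (hH : ∀ e ∈ H, #e = m) :
    ∀ e ∈ blowup L H, #e = k * m := by
  rintro _ he
  obtain ⟨ℓ, hℓ, ε, hε, rfl⟩ := mem_blowup.1 he
  simp [card_lineEdge (hL ℓ hℓ), hH _ (hε _)]

lemma blowup_intersecting (hL : ∀ ℓ ∈ L, ∀ ℓ' ∈ L, ∃ i i', ℓ i = ℓ' i')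
    (hH : (H : Set (Finset V)).Intersecting) :
    (blowup L H : Set (Finset (V × W))).Intersecting := by
  rintro _ he _ hf
  obtain ⟨ℓ, hℓ, ε, hε, rfl⟩ := mem_blowup.1 he
  obtain ⟨ℓ', hℓ', ε', hε', rfl⟩ := mem_blowup.1 hf
  obtain ⟨i, i', hii'⟩ := hL ℓ hℓ ℓ' hℓ'
  obtain ⟨v, hv⟩ := not_disjoint_iff_nonempty_inter.1 (hH (hε i) (hε' i'))
  rw [mem_inter] at hv
  exact not_disjoint_iff.2
    ⟨(v, ℓ i), mem_lineEdge.2 ⟨i, hv.1, rfl⟩, mem_lineEdge.2 ⟨i', hv.2, hii'⟩⟩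

lemma IsNonTwoColorable.blowup (hL : ∀ c : W → Bool, ∃ ℓ ∈ L, ∃ b, ∀ i, c (ℓ i) = b)
    (hH : IsNonTwoColorable H) : IsNonTwoColorable (blowup L H) := by
  intro c
  choose E hE b hb using fun w => hH fun v => c (v, w)
  obtain ⟨ℓ, hℓ, b₀, hb₀⟩ := hL b
  refine ⟨lineEdge ℓ (E ∘ ℓ), mem_blowup.2 ⟨ℓ, hℓ, _, fun i => hE _, rfl⟩, b₀, ?_⟩
  rintro ⟨v, w⟩ hvw
  obtain ⟨i, hv, rfl⟩ := mem_lineEdge.1 hvw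
  rw [hb _ v hv, hb₀]

lemma blowup_spectrum (hk : Odd k) (hk1 : 1 < k) (hL : ∀ ℓ ∈ L, Injective ℓ)
    (hL' : ∀ ℓ ∈ L, ∀ ℓ' ∈ L, ℓ ≠ ℓ' → ∃ i i', ∀ j j', ℓ j = ℓ' j' ↔ j = i ∧ j' = i')
    (hm : Odd m) (hH : ∀ e ∈ H, #e = m)
    (hspec : ∀ e ∈ H, ∀ f ∈ H, e ≠ f → Odd #(e ∩ f) ∧ #(e ∩ f) ≤ m - 2) :
    ∀ e ∈ blowup L H, ∀ f ∈ blowup L H, e ≠ f → Odd #(e ∩ f) ∧ #(e ∩ f) ≤ k * m - 2 := by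
  have slot : ∀ a ∈ H, ∀ b ∈ H, Odd #(a ∩ b) ∧ #(a ∩ b) ≤ m := by
    intro a ha b hb
    obtain rfl | hab := eq_or_ne a b
    · rw [inter_self, hH a ha]
      exact ⟨hm, le_rfl⟩
    · exact (hspec a ha b hb hab).imp_right fun h => h.trans (Nat.sub_le _ _)
  rintro _ he _ hf hef
  obtain ⟨ℓ, hℓ, ε, hε, rfl⟩ := mem_blowup.1 he
  obtain ⟨ℓ', hℓ', ε', hε', rfl⟩ := mem_blowup.1 hf
  obtain rfl | hℓℓ' := eq_or_ne ℓ ℓ'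
  · obtain ⟨i₀, hi₀⟩ : ∃ i, ε i ≠ ε' i := by
      by_contra! h
      exact hef (congrArg _ (funext h))
    rw [lineEdge_inter_lineEdge_self (hL ℓ hℓ), card_lineEdge (hL ℓ hℓ)]
    exact odd_sum_and_sum_le_mul_sub_two hk (fun i => slot _ (hε i) _ (hε' i))
      (hspec _ (hε i₀) _ (hε' i₀) hi₀).2
  · obtain ⟨i, i', hmeet⟩ := hL' ℓ hℓ ℓ' hℓ' hℓℓ'
    rw [lineEdge_inter_lineEdge_of_meet hmeet, card_product, card_singleton, mul_one]
    obtain ⟨hodd, hle⟩ := slot _ (hε i) _ (hε' i')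
    have h3k : 3 * m ≤ k * m := Nat.mul_le_mul_right _ (by obtain ⟨r, rfl⟩ := hk; omega)
    have := hm.pos
    exact ⟨hodd, by omega⟩

end blowup

set_option maxRecDepth 10000

-- Lines are listed as injective maps `Fin 3 → Fin 7`, so that an edge of the blow-up can
-- address the copy over each point of its line.
def fanoLines : Finset (Fin 3 → Fin 7) :=
  {![0, 1, 2], ![0, 3, 4], ![0, 5, 6], ![1, 3, 5], ![1, 4, 6], ![2, 3, 6], ![2, 4, 5]}

lemma card_fanoLines : #fanoLines = 7 := by decide

lemma injective_of_mem_fanoLines : ∀ ℓ ∈ fanoLines, Injective ℓ := by decide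

lemma fanoLines_meet : ∀ ℓ ∈ fanoLines, ∀ ℓ' ∈ fanoLines, ∃ i i', ℓ i = ℓ' i' := by decide

lemma fanoLines_meet_uniquely : ∀ ℓ ∈ fanoLines, ∀ ℓ' ∈ fanoLines, ℓ ≠ ℓ' →
    ∃ i i', ∀ j j', ℓ j = ℓ' j' ↔ j = i ∧ j' = i' := by decide

lemma fanoLines_eq_of_image_eq : ∀ ℓ ∈ fanoLines, ∀ ℓ' ∈ fanoLines,
    univ.image ℓ = univ.image ℓ' → ℓ = ℓ' := by decide

lemma fanoLines_not_twoColorable : ∀ c : Fin 7 → Bool, ∃ ℓ ∈ fanoLines, ∃ b, ∀ i, c (ℓ i) = b := by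
  decide

structure IsFanoLike (m : ℕ) (H : Finset (Finset V)) : Prop where
  uniform : ∀ e ∈ H, #e = m
  intersecting : (H : Set (Finset V)).Intersecting
  nonTwoColorable : IsNonTwoColorable H
  card_eq : #H = 7 ^ ((m - 1) / 2)
  spectrum : ∀ e ∈ H, ∀ f ∈ H, e ≠ f → Odd #(e ∩ f) ∧ #(e ∩ f) ≤ m - 2

lemma isFanoLike_singleton_univ : IsFanoLike 1 {(univ : Finset (Fin 1))} where
  uniform := by simp
  intersecting := by simp [Set.Intersecting]
  nonTwoColorable c := ⟨univ, mem_singleton_self _, c 0, by simp [Fin.fin_one_eq_zero]⟩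
  card_eq := rfl
  spectrum := by simp

lemma seven_mul_pow_three {m : ℕ} (hm : Odd m) :
    7 * (7 ^ ((m - 1) / 2)) ^ 3 = 7 ^ ((3 * m - 1) / 2) := by
  obtain ⟨r, rfl⟩ := hm
  rw [← pow_mul, ← pow_succ']
  congr 1
  omega

lemma IsFanoLike.blowup {m : ℕ} {H : Finset (Finset V)} (hm : Odd m) (hH : IsFanoLike m H) :
    IsFanoLike (3 * m) (blowup fanoLines H) where
  uniform := blowup_uniform injective_of_mem_fanoLines hH.uniform
  intersecting := blowup_intersecting fanoLines_meet hH.intersecting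
  nonTwoColorable := hH.nonTwoColorable.blowup fanoLines_not_twoColorable
  card_eq := by
    rw [card_blowup injective_of_mem_fanoLines fanoLines_eq_of_image_eq
      (fun e he => nonempty_iff_ne_empty.2 (hH.intersecting.ne_bot he)), card_fanoLines,
      hH.card_eq, seven_mul_pow_three hm]
  spectrum := blowup_spectrum (by decide) (by decide) injective_of_mem_fanoLines
    fanoLines_meet_uniquely hm hH.uniform hH.spectrum

lemma IsFanoLike.map {V' : Type*} [DecidableEq V'] {m : ℕ} {H : Finset (Finset V)}
    (hH : IsFanoLike m H) (φ : V ↪ V') : IsFanoLike m (H.map (mapEmbedding φ).toEmbedding) where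
  uniform := by
    simp only [mem_map, RelEmbedding.coe_toEmbedding, mapEmbedding_apply]
    rintro _ ⟨e, he, rfl⟩
    rw [card_map, hH.uniform e he]
  intersecting := by
    simp only [coe_map, RelEmbedding.coe_toEmbedding]
    rintro _ ⟨e, he, rfl⟩ _ ⟨f, hf, rfl⟩
    simp only [mapEmbedding_apply, disjoint_map]
    exact hH.intersecting he hf
  nonTwoColorable c := by
    obtain ⟨e, he, b, hb⟩ := hH.nonTwoColorable (c ∘ φ)
    exact ⟨e.map φ, mem_map_of_mem _ he, b, by simpa using hb⟩
  card_eq := by rw [card_map, hH.card_eq]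
  spectrum := by
    simp only [mem_map, RelEmbedding.coe_toEmbedding, mapEmbedding_apply]
    rintro _ ⟨e, he, rfl⟩ _ ⟨f, hf, rfl⟩ hef
    rw [← map_inter, card_map]
    exact hH.spectrum e he f hf (ne_of_apply_ne _ hef)

lemma exists_isFanoLike_fin (j : ℕ) :
    ∃ N, ∃ H : Finset (Finset (Fin N)), IsFanoLike (3 ^ j) H := by
  induction j with
  | zero => exact ⟨1, _, isFanoLike_singleton_univ⟩
  | succ j ih =>
    obtain ⟨N, H, hH⟩ := ih
    rw [pow_succ']
    exact ⟨_, _, (hH.blowup (Odd.pow (by decide))).map finProdFinEquiv.toEmbedding⟩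

end FanoBlowup

/-- Iterated Fano plane construction: for every `n` that is a power of 3 there is an
`n`-uniform, intersecting, non-2-colorable hypergraph with `7^{(n−1)/2}` edges whose
intersection spectrum consists only of odd numbers between `1` and `n − 2`. -/
theorem stmt_19 (n : ℕ) (hpow : ∃ j : ℕ, n = 3 ^ j) :
    ∃ (N : ℕ) (H : Finset (Finset (Fin N))),
      (∀ e ∈ H, e.card = n) ∧
      (∀ e ∈ H, ∀ f ∈ H, (e ∩ f).Nonempty) ∧
      (¬ ∃ c : Fin N → Bool, ∀ e ∈ H, ∃ u ∈ e, ∃ v ∈ e, c u ≠ c v) ∧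
      H.card = 7 ^ ((n - 1) / 2) ∧
      (∀ i ∈ H.offDiag.image fun p => (p.1 ∩ p.2).card,
        Odd i ∧ 1 ≤ i ∧ i ≤ n - 2) := by
  obtain ⟨j, rfl⟩ := hpow
  obtain ⟨N, H, hH⟩ := FanoBlowup.exists_isFanoLike_fin j
  refine ⟨N, H, hH.uniform, fun e he f hf => not_disjoint_iff_nonempty_inter.1
    (hH.intersecting he hf), ?_, hH.card_eq, ?_⟩
  · rintro ⟨c, hc⟩
    obtain ⟨e, he, b, hb⟩ := hH.nonTwoColorable c
    obtain ⟨u, hu, v, hv, huv⟩ := hc e he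
    exact huv ((hb u hu).trans (hb v hv).symm)
  · simp only [mem_image, mem_offDiag]
    rintro _ ⟨⟨e, f⟩, ⟨he, hf, hef⟩, rfl⟩
    obtain ⟨hodd, hle⟩ := hH.spectrum e he f hf hef
    exact ⟨hodd, hodd.pos, hle⟩
end
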